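/- arXiv:2202.12078 — 9 statements merged into one kernel-verified Lean document; each statement's English description precedes it below -/
import Mathlib

section
/- Let (Z_n) be real random variables with Z_n →d* ν, let G(z) := ν((−∞, z]) denote the cumulative distribution function of ν, and for each z ∈ ℝ let G*_n(z) := P(Z_n ≤ z | 𝒢_n). Then for every z ∈ ℝ at which G is continuous, the random variables G*_n(z) converge in probability to the constant G(z) as n → ∞. -/
open MeasureTheory Filter Topology

noncomputable section

/-- Convergence in probability: `P(|X_n - Y| > ε) → 0` for every `ε > 0`. -/
def TendstoInProb {Ω : Type*} [MeasurableSpace Ω] (P : Measure Ω)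
    (X : ℕ → Ω → ℝ) (Y : Ω → ℝ) : Prop :=
  ∀ ε : ℝ, 0 < ε → Tendsto (fun n => P {ω | ε < |X n ω - Y ω|}) atTop (nhds 0)

/-- Conditional probability of the event `A` given the sub-σ-algebra `G`:
`P(A | G) = E[1_A | G]`. -/
def condProb {Ω : Type*} [MeasurableSpace Ω] (P : Measure Ω)
    (G : MeasurableSpace Ω) (A : Set Ω) : Ω → ℝ :=
  P[A.indicator (fun _ => (1 : ℝ)) | G]

/-- Conditional convergence in distribution (in probability), `Z_n →d* ν`:
for every bounded Lipschitz `h : ℝ → ℝ`, `E[h(Z_n) | 𝒢_n] →P ∫ h dν`. -/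
def CondConvInDist {Ω : Type*} [MeasurableSpace Ω] (P : Measure Ω)
    (G : ℕ → MeasurableSpace Ω) (Z : ℕ → Ω → ℝ) (ν : Measure ℝ) : Prop :=
  ∀ h : ℝ → ℝ, (∃ K, LipschitzWith K h) → (∃ C, ∀ x, |h x| ≤ C) →
    TendstoInProb P (fun n => P[(fun ω => h (Z n ω)) | G n]) (fun _ => ∫ x, h x ∂ν)

/-- The clamp function used to approximate the indicator of `Iic`. -/
def clampFn (c δ : ℝ) : ℝ → ℝ := fun x => max 0 (min 1 ((c - x) / δ))

lemma clampFn_lipschitz (c δ : ℝ) (hδ : 0 < δ) :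
    ∃ K, LipschitzWith K (clampFn c δ) := by
  refine ⟨Real.toNNReal δ⁻¹, LipschitzWith.of_dist_le_mul fun a b => ?_⟩
  simp only [clampFn, Real.dist_eq]
  have h1 : |max 0 (min 1 ((c - a) / δ)) - max 0 (min 1 ((c - b) / δ))|
      ≤ |min 1 ((c - a) / δ) - min 1 ((c - b) / δ)| := by
    have := abs_max_sub_max_le_abs (min 1 ((c - a) / δ)) (min 1 ((c - b) / δ)) 0
    simpa [max_comm] using this
  have h2 : |min 1 ((c - a) / δ) - min 1 ((c - b) / δ)| ≤ |(c - a) / δ - (c - b) / δ| := by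
    have := abs_min_sub_min_le_max (1 : ℝ) ((c - a) / δ) 1 ((c - b) / δ)
    simpa using this
  have h3 : |(c - a) / δ - (c - b) / δ| = δ⁻¹ * |a - b| := by
    rw [div_sub_div_same]
    have : (c - a - (c - b)) = -(a - b) := by ring
    rw [this, abs_div, abs_neg, abs_of_pos hδ, div_eq_inv_mul]
  have h4 : (Real.toNNReal δ⁻¹ : ℝ) = δ⁻¹ := Real.coe_toNNReal _ (by positivity)
  calc |max 0 (min 1 ((c - a) / δ)) - max 0 (min 1 ((c - b) / δ))|
      ≤ |(c - a) / δ - (c - b) / δ| := h1.trans h2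
    _ = δ⁻¹ * |a - b| := h3
    _ = (Real.toNNReal δ⁻¹ : ℝ) * |a - b| := by rw [h4]

lemma clampFn_nonneg (c δ x : ℝ) : 0 ≤ clampFn c δ x := le_max_left _ _

lemma clampFn_le_one (c δ x : ℝ) : clampFn c δ x ≤ 1 := by
  simp only [clampFn]
  exact max_le zero_le_one (min_le_left _ _)

lemma clampFn_abs_le (c δ x : ℝ) : |clampFn c δ x| ≤ 1 := by
  rw [abs_of_nonneg (clampFn_nonneg c δ x)]; exact clampFn_le_one c δ x

lemma clampFn_eq_one (c δ x : ℝ) (hδ : 0 < δ) (hx : x ≤ c - δ) : clampFn c δ x = 1 := by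
  have h1 : (1 : ℝ) ≤ (c - x) / δ := by
    rw [le_div_iff₀ hδ]; linarith
  simp [clampFn, min_eq_left h1]

lemma clampFn_eq_zero (c δ x : ℝ) (hδ : 0 < δ) (hx : c ≤ x) : clampFn c δ x = 0 := by
  have h1 : (c - x) / δ ≤ 0 := div_nonpos_of_nonpos_of_nonneg (by linarith) hδ.le
  have h2 : min 1 ((c - x) / δ) ≤ 0 := le_trans (min_le_right _ _) h1
  simp [clampFn, max_eq_left h2]

lemma clampFn_continuous (c δ : ℝ) : Continuous (clampFn c δ) := by
  unfold clampFn; fun_prop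

/-- bounded measurable functions are integrable w.r.t. a finite measure -/
lemma integrable_of_bdd {Ω : Type*} [MeasurableSpace Ω] (P : Measure Ω) [IsFiniteMeasure P]
    {f : Ω → ℝ} (hf : Measurable f) (C : ℝ) (h : ∀ x, |f x| ≤ C) : Integrable f P :=
  ⟨hf.aestronglyMeasurable,
    HasFiniteIntegral.of_bounded (C := C) (ae_of_all _ fun x => by
      simpa [Real.norm_eq_abs] using h x)⟩

/-- If `Z_n →d* ν` and `G(z) = ν((-∞, z])` is continuous at `z`, then the conditional
CDFs `G*_n(z) = P(Z_n ≤ z | 𝒢_n)` converge in probability to the constant `G(z)`. -/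
theorem stmt0 {Ω : Type*} [m0 : MeasurableSpace Ω] (P : Measure Ω)
    [IsProbabilityMeasure P] (G : ℕ → MeasurableSpace Ω) (hG : ∀ n, G n ≤ m0)
    (Z : ℕ → Ω → ℝ) (hZ : ∀ n, Measurable (Z n))
    (ν : Measure ℝ) [IsProbabilityMeasure ν]
    (hconv : CondConvInDist P G Z ν)
    (z : ℝ) (hz : ContinuousAt (fun t => (ν (Set.Iic t)).toReal) z) :
    TendstoInProb P (fun n => condProb P (G n) {ω | Z n ω ≤ z})
      (fun _ => (ν (Set.Iic z)).toReal) := by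
  intro ε hε
  set F : ℝ → ℝ := fun t => (ν (Set.Iic t)).toReal with hF
  -- choose δ from continuity
  obtain ⟨δ0, hδ0, hδprop⟩ : ∃ δ0 > 0, ∀ t, |t - z| < δ0 → |F t - F z| < ε / 2 := by
    have := Metric.continuousAt_iff.mp hz (ε / 2) (by linarith)
    obtain ⟨δ0, hδ0, hd⟩ := this
    exact ⟨δ0, hδ0, fun t ht => by simpa [Real.dist_eq] using hd (by simpa [Real.dist_eq] using ht)⟩
  set δ : ℝ := δ0 / 2 with hδdef
  have hδ : 0 < δ := by positivity
  set hfun : ℝ → ℝ := clampFn (z + δ) δ with hhfun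
  set gfun : ℝ → ℝ := clampFn z δ with hgfun
  -- pointwise sandwich
  have hind_le_h : ∀ x, (Set.Iic z).indicator (fun _ => (1 : ℝ)) x ≤ hfun x := by
    intro x
    by_cases hx : x ≤ z
    · rw [Set.indicator_of_mem (Set.mem_Iic.mpr hx), hhfun,
        clampFn_eq_one _ _ _ hδ (by linarith)]
    · rw [Set.indicator_of_notMem (by simpa using hx)]; exact clampFn_nonneg _ _ _
  have hg_le_ind : ∀ x, gfun x ≤ (Set.Iic z).indicator (fun _ => (1 : ℝ)) x := by
    intro x
    by_cases hx : x ≤ z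
    · rw [Set.indicator_of_mem (Set.mem_Iic.mpr hx)]; exact clampFn_le_one _ _ _
    · rw [Set.indicator_of_notMem (by simpa using hx), hgfun,
        clampFn_eq_zero _ _ _ hδ (by linarith)]
  have hh_le_ind : ∀ x, hfun x ≤ (Set.Iic (z + δ)).indicator (fun _ => (1 : ℝ)) x := by
    intro x
    by_cases hx : x ≤ z + δ
    · rw [Set.indicator_of_mem (Set.mem_Iic.mpr hx)]; exact clampFn_le_one _ _ _
    · rw [Set.indicator_of_notMem (by simpa using hx), hhfun,
        clampFn_eq_zero _ _ _ hδ (by linarith)]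
  have hind_le_g : ∀ x, (Set.Iic (z - δ)).indicator (fun _ => (1 : ℝ)) x ≤ gfun x := by
    intro x
    by_cases hx : x ≤ z - δ
    · rw [Set.indicator_of_mem (Set.mem_Iic.mpr hx), hgfun,
        clampFn_eq_one _ _ _ hδ (by linarith)]
    · rw [Set.indicator_of_notMem (by simpa using hx)]; exact clampFn_nonneg _ _ _
  -- integrability w.r.t. ν
  have hint_ind : ∀ t : ℝ, Integrable ((Set.Iic t).indicator (fun _ => (1 : ℝ))) ν :=
    fun t => (integrable_const (1 : ℝ)).indicator measurableSet_Iic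
  have hint_h : Integrable hfun ν :=
    integrable_of_bdd ν (clampFn_continuous _ _).measurable 1 (clampFn_abs_le _ _)
  have hint_g : Integrable gfun ν :=
    integrable_of_bdd ν (clampFn_continuous _ _).measurable 1 (clampFn_abs_le _ _)
  have hint_eq : ∀ t : ℝ, ∫ x, (Set.Iic t).indicator (fun _ => (1 : ℝ)) x ∂ν = F t := by
    intro t
    have := integral_indicator_one (μ := ν) measurableSet_Iic (s := Set.Iic t)
    simpa [hF, measureReal_def] using this
  -- integral bounds
  set a : ℝ := ∫ x, hfun x ∂ν with ha
  set b : ℝ := ∫ x, gfun x ∂ν with hb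
  have haz : F z ≤ a := by
    rw [← hint_eq z]; exact integral_mono (hint_ind z) hint_h hind_le_h
  have haz' : a ≤ F (z + δ) := by
    rw [← hint_eq (z + δ)]; exact integral_mono hint_h (hint_ind _) hh_le_ind
  have hbz : b ≤ F z := by
    rw [← hint_eq z]; exact integral_mono hint_g (hint_ind z) hg_le_ind
  have hbz' : F (z - δ) ≤ b := by
    rw [← hint_eq (z - δ)]; exact integral_mono (hint_ind _) hint_g hind_le_g
  have ha_close : a - F z < ε / 2 := by
    have := hδprop (z + δ) (by rw [add_sub_cancel_left, abs_of_pos hδ]; simpa [hδdef] using half_lt_self hδ0)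
    have h2 : F (z + δ) - F z < ε / 2 := lt_of_le_of_lt (le_abs_self _) this
    linarith
  have hb_close : F z - b < ε / 2 := by
    have := hδprop (z - δ) (by
      have : z - δ - z = -δ := by ring
      rw [this, abs_neg, abs_of_pos hδ]; simpa [hδdef] using half_lt_self hδ0)
    have h2 : -(F (z - δ) - F z) < ε / 2 := lt_of_le_of_lt (neg_le_abs _) this
    linarith
  -- convergence of the two conditional expectations
  have hconvh := hconv hfun (clampFn_lipschitz _ _ hδ) ⟨1, clampFn_abs_le _ _⟩ (ε / 2) (by linarith)
  have hconvg := hconv gfun (clampFn_lipschitz _ _ hδ) ⟨1, clampFn_abs_le _ _⟩ (ε / 2) (by linarith)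
  -- a.e. sandwich of conditional expectations
  have hcond_sandwich : ∀ n,
      (P[(fun ω => gfun (Z n ω)) | G n] ≤ᵐ[P] condProb P (G n) {ω | Z n ω ≤ z}) ∧
      (condProb P (G n) {ω | Z n ω ≤ z} ≤ᵐ[P] P[(fun ω => hfun (Z n ω)) | G n]) := by
    intro n
    have hind_eq : {ω | Z n ω ≤ z}.indicator (fun _ => (1 : ℝ))
        = fun ω => (Set.Iic z).indicator (fun _ => (1 : ℝ)) (Z n ω) := by
      funext ω
      simp only [Set.indicator_apply, Set.mem_setOf_eq, Set.mem_Iic]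
    have hint_indP : Integrable ({ω | Z n ω ≤ z}.indicator (fun _ => (1 : ℝ))) P :=
      (integrable_const (1 : ℝ)).indicator ((hZ n) measurableSet_Iic)
    have hint_hP : Integrable (fun ω => hfun (Z n ω)) P :=
      integrable_of_bdd P ((clampFn_continuous _ _).measurable.comp (hZ n)) 1
        (fun ω => clampFn_abs_le _ _ _)
    have hint_gP : Integrable (fun ω => gfun (Z n ω)) P :=
      integrable_of_bdd P ((clampFn_continuous _ _).measurable.comp (hZ n)) 1
        (fun ω => clampFn_abs_le _ _ _)
    constructor
    · refine condExp_mono hint_gP hint_indP (ae_of_all _ fun ω => ?_)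
      rw [hind_eq]; exact hg_le_ind (Z n ω)
    · refine condExp_mono hint_indP hint_hP (ae_of_all _ fun ω => ?_)
      rw [hind_eq]; exact hind_le_h (Z n ω)
  -- the key set inclusion up to null sets
  have hkey : ∀ n, P {ω | ε < |condProb P (G n) {ω | Z n ω ≤ z} ω - F z|}
      ≤ P {ω | ε / 2 < |(P[(fun ω => hfun (Z n ω)) | G n]) ω - a|}
        + P {ω | ε / 2 < |(P[(fun ω => gfun (Z n ω)) | G n]) ω - b|} := by
    intro n
    refine le_trans (measure_mono_ae ?_) (measure_union_le _ _)
    filter_upwards [(hcond_sandwich n).1, (hcond_sandwich n).2] with ω hlo hhi hmem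
    have hmem' : ε < |condProb P (G n) {ω | Z n ω ≤ z} ω - F z| := hmem
    set X := condProb P (G n) {ω | Z n ω ≤ z} ω
    have goal : ε / 2 < |(P[(fun ω => hfun (Z n ω)) | G n]) ω - a|
        ∨ ε / 2 < |(P[(fun ω => gfun (Z n ω)) | G n]) ω - b| := by
      rcases lt_or_ge (F z) X with hc | hc
      · have hXFz : ε < X - F z := by
          rw [abs_of_pos (by linarith)] at hmem'; exact hmem'
        left
        have h1 : ε / 2 < (P[(fun ω => hfun (Z n ω)) | G n]) ω - a := by linarith
        exact lt_of_lt_of_le h1 (le_abs_self _)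
      · have hXFz : ε < F z - X := by
          rw [abs_of_nonpos (by linarith), neg_sub] at hmem'; exact hmem'
        right
        have h2 : ε / 2 < -((P[(fun ω => gfun (Z n ω)) | G n]) ω - b) := by linarith
        exact lt_of_lt_of_le h2 (neg_le_abs _)
    exact goal
  -- squeeze
  have hsum : Tendsto (fun n => P {ω | ε / 2 < |(P[(fun ω => hfun (Z n ω)) | G n]) ω - a|}
      + P {ω | ε / 2 < |(P[(fun ω => gfun (Z n ω)) | G n]) ω - b|}) atTop (nhds 0) := by
    simpa using hconvh.add hconvg
  exact tendsto_of_tendsto_of_tendsto_of_le_of_le tendsto_const_nhds hsum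
    (fun n => zero_le) hkey
end
end

section
/- Let (Z_n) be real random variables with Z_n →d* ν, and suppose the cumulative distribution function G(z) := ν((−∞, z]) is continuous at every point of ℝ. For each z ∈ ℝ let G*_n(z) := P(Z_n ≤ z | 𝒢_n). Then for every countable dense subset D ⊆ ℝ, the random variables sup_{z ∈ D} |G*_n(z) − G(z)| converge to 0 in probability as n → ∞. -/
open MeasureTheory Filter Topology

noncomputable section

/-- Piecewise linear ramp: 1 on `(-∞, c-δ]`, 0 on `[c, ∞)`. -/
def ramp (c δ t : ℝ) : ℝ := max 0 (min 1 ((c - t) / δ))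

lemma ramp_nonneg (c δ t : ℝ) : 0 ≤ ramp c δ t := le_max_left _ _

lemma ramp_le_one (c δ t : ℝ) : ramp c δ t ≤ 1 :=
  max_le zero_le_one (min_le_left _ _)

lemma ramp_abs_le (c δ t : ℝ) : |ramp c δ t| ≤ 1 :=
  abs_le.mpr ⟨by linarith [ramp_nonneg c δ t], ramp_le_one c δ t⟩

lemma ramp_eq_one {c δ t : ℝ} (hδ : 0 < δ) (h : t ≤ c - δ) : ramp c δ t = 1 := by
  have h1 : (1 : ℝ) ≤ (c - t) / δ := (le_div_iff₀ hδ).mpr (by linarith)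
  rw [ramp, min_eq_left h1, max_eq_right zero_le_one]

lemma ramp_eq_zero {c δ t : ℝ} (hδ : 0 < δ) (h : c ≤ t) : ramp c δ t = 0 := by
  have h1 : (c - t) / δ ≤ 0 := div_nonpos_of_nonpos_of_nonneg (by linarith) hδ.le
  simp only [ramp]
  rw [max_eq_left]
  exact le_trans (min_le_right _ _) h1

lemma ramp_lipschitz (c : ℝ) {δ : ℝ} (hδ : 0 < δ) :
    LipschitzWith (Real.toNNReal δ⁻¹) (ramp c δ) := by
  apply LipschitzWith.of_dist_le_mul
  intro x y
  simp only [Real.dist_eq]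
  calc |ramp c δ x - ramp c δ y|
      ≤ |min 1 ((c - x) / δ) - min 1 ((c - y) / δ)| := by
        rw [ramp, ramp, max_comm 0 _, max_comm 0 _]
        exact abs_max_sub_max_le_abs _ _ _
    _ ≤ max |(1:ℝ) - 1| |(c - x) / δ - (c - y) / δ| := abs_min_sub_min_le_max _ _ _ _
    _ ≤ |(c - x) / δ - (c - y) / δ| := by simp
    _ = (Real.toNNReal δ⁻¹ : ℝ) * |x - y| := by
        rw [div_sub_div_same, Real.coe_toNNReal _ (inv_nonneg.mpr hδ.le)]
        rw [show c - x - (c - y) = -(x - y) by ring, abs_div, abs_neg,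
          abs_of_pos hδ, div_eq_inv_mul]

lemma ramp_ge_indicator {c δ : ℝ} (hδ : 0 < δ) (t : ℝ) :
    Set.indicator (Set.Iic (c - δ)) (fun _ => (1:ℝ)) t ≤ ramp c δ t := by
  by_cases h : t ∈ Set.Iic (c - δ)
  · rw [Set.indicator_of_mem h, ramp_eq_one hδ h]
  · rw [Set.indicator_of_notMem h]; exact ramp_nonneg _ _ _

lemma ramp_le_indicator {c δ : ℝ} (hδ : 0 < δ) (t : ℝ) :
    ramp c δ t ≤ Set.indicator (Set.Iic c) (fun _ => (1:ℝ)) t := by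
  by_cases h : t ∈ Set.Iic c
  · rw [Set.indicator_of_mem h]; exact ramp_le_one _ _ _
  · rw [Set.indicator_of_notMem h,
      ramp_eq_zero hδ (not_le.mp (fun hh => h (Set.mem_Iic.mpr hh))).le]

lemma integrable_of_abs_le_one {α : Type*} [MeasurableSpace α] (μ : Measure α)
    [IsFiniteMeasure μ] {f : α → ℝ} (hf : AEStronglyMeasurable f μ)
    (h : ∀ x, |f x| ≤ 1) : Integrable f μ :=
  (integrable_const 1).mono' hf (Filter.Eventually.of_forall
    (by simpa [Real.norm_eq_abs] using h))

lemma integral_indicator_Iic (ν : Measure ℝ) [IsProbabilityMeasure ν] (c : ℝ) :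
    ∫ t, Set.indicator (Set.Iic c) (fun _ => (1:ℝ)) t ∂ν = (ν (Set.Iic c)).toReal := by
  rw [integral_indicator_const (1:ℝ) measurableSet_Iic, smul_eq_mul, mul_one]; rfl

lemma integral_ramp_le (ν : Measure ℝ) [IsProbabilityMeasure ν] {c δ : ℝ} (hδ : 0 < δ) :
    ∫ t, ramp c δ t ∂ν ≤ (ν (Set.Iic c)).toReal := by
  rw [← integral_indicator_Iic ν c]
  exact integral_mono
    (integrable_of_abs_le_one ν ((ramp_lipschitz c hδ).continuous.aestronglyMeasurable)
      (ramp_abs_le c δ))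
    ((integrable_const 1).indicator measurableSet_Iic) (ramp_le_indicator hδ)

lemma le_integral_ramp (ν : Measure ℝ) [IsProbabilityMeasure ν] {c δ : ℝ} (hδ : 0 < δ) :
    (ν (Set.Iic (c - δ))).toReal ≤ ∫ t, ramp c δ t ∂ν := by
  rw [← integral_indicator_Iic ν (c - δ)]
  exact integral_mono ((integrable_const 1).indicator measurableSet_Iic)
    (integrable_of_abs_le_one ν ((ramp_lipschitz c hδ).continuous.aestronglyMeasurable)
      (ramp_abs_le c δ))
    (ramp_ge_indicator hδ)

lemma tendsto_zero_of_le_add {A B C : ℕ → ENNReal} (h : ∀ n, A n ≤ B n + C n)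
    (hB : Tendsto B atTop (𝓝 0)) (hC : Tendsto C atTop (𝓝 0)) :
    Tendsto A atTop (𝓝 0) := by
  have hs : Tendsto (fun n => B n + C n) atTop (𝓝 0) := by simpa using hB.add hC
  exact tendsto_of_tendsto_of_tendsto_of_le_of_le tendsto_const_nhds hs
    (fun n => zero_le) h

lemma pointwise_conv {Ω : Type*} [m0 : MeasurableSpace Ω] (P : Measure Ω)
    [IsProbabilityMeasure P] (G : ℕ → MeasurableSpace Ω)
    (Z : ℕ → Ω → ℝ) (hZ : ∀ n, Measurable (Z n))
    (ν : Measure ℝ) [IsProbabilityMeasure ν]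
    (hconv : CondConvInDist P G Z ν)
    (hcont : ∀ z : ℝ, ContinuousAt (fun t => (ν (Set.Iic t)).toReal) z) (z : ℝ) :
    TendstoInProb P (fun n => condProb P (G n) {ω' | Z n ω' ≤ z})
      (fun _ => (ν (Set.Iic z)).toReal) := by
  intro ε hε
  have hε2 : 0 < ε / 2 := by linarith
  obtain ⟨δ₀, hδ₀, hδc⟩ := Metric.continuousAt_iff.mp (hcont z) (ε / 2) hε2
  have hδ : 0 < δ₀ / 2 := by linarith
  set δ : ℝ := δ₀ / 2 with hδdef
  have hup : (ν (Set.Iic (z + δ))).toReal < (ν (Set.Iic z)).toReal + ε / 2 := by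
    have h1 := hδc (x := z + δ) (by
      rw [Real.dist_eq, show z + δ - z = δ by ring, abs_of_pos hδ]; linarith)
    rw [Real.dist_eq] at h1
    have := abs_lt.mp h1
    linarith [this.2]
  have hlo : (ν (Set.Iic z)).toReal - ε / 2 < (ν (Set.Iic (z - δ))).toReal := by
    have h1 := hδc (x := z - δ) (by
      rw [Real.dist_eq, show z - δ - z = -δ by ring, abs_neg, abs_of_pos hδ]; linarith)
    rw [Real.dist_eq] at h1
    have := abs_lt.mp h1
    linarith [this.1]
  have hLp := ramp_lipschitz (z + δ) hδ
  have hLm := ramp_lipschitz z hδ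
  have hIp1 : ∫ t, ramp (z + δ) δ t ∂ν ≤ (ν (Set.Iic (z + δ))).toReal :=
    integral_ramp_le ν hδ
  have hIp2 : (ν (Set.Iic z)).toReal ≤ ∫ t, ramp (z + δ) δ t ∂ν := by
    have := le_integral_ramp ν (c := z + δ) (δ := δ) hδ
    rwa [show z + δ - δ = z by ring] at this
  have hIm1 : ∫ t, ramp z δ t ∂ν ≤ (ν (Set.Iic z)).toReal := integral_ramp_le ν hδ
  have hIm2 : (ν (Set.Iic (z - δ))).toReal ≤ ∫ t, ramp z δ t ∂ν :=
    le_integral_ramp ν hδ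
  have hBp := hconv (ramp (z + δ) δ) ⟨_, hLp⟩ ⟨1, ramp_abs_le _ _⟩ (ε / 2) hε2
  have hBm := hconv (ramp z δ) ⟨_, hLm⟩ ⟨1, ramp_abs_le _ _⟩ (ε / 2) hε2
  refine tendsto_zero_of_le_add (fun n => ?_) hBp hBm
  have intind : Integrable ({ω' | Z n ω' ≤ z}.indicator (fun _ => (1:ℝ))) P :=
    (integrable_const 1).indicator (hZ n measurableSet_Iic)
  have intp : Integrable (fun ω => ramp (z + δ) δ (Z n ω)) P :=
    integrable_of_abs_le_one P
      (hLp.continuous.aestronglyMeasurable.comp_measurable (hZ n))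
      (fun ω => ramp_abs_le _ _ _)
  have intm : Integrable (fun ω => ramp z δ (Z n ω)) P :=
    integrable_of_abs_le_one P
      (hLm.continuous.aestronglyMeasurable.comp_measurable (hZ n))
      (fun ω => ramp_abs_le _ _ _)
  have haep : ∀ᵐ ω ∂P, condProb P (G n) {ω' | Z n ω' ≤ z} ω ≤
      (P[(fun ω => ramp (z + δ) δ (Z n ω)) | G n]) ω := by
    simp only [condProb]
    refine condExp_mono intind intp (Filter.Eventually.of_forall fun ω => ?_)
    by_cases h : Z n ω ≤ z
    · have h1 : ({ω' | Z n ω' ≤ z}.indicator (fun _ => (1:ℝ))) ω = 1 :=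
        Set.indicator_of_mem (show ω ∈ {ω' | Z n ω' ≤ z} from h) _
      simp only [h1]; exact le_of_eq (ramp_eq_one hδ (by linarith)).symm
    · have h1 : ({ω' | Z n ω' ≤ z}.indicator (fun _ => (1:ℝ))) ω = 0 :=
        Set.indicator_of_notMem (show ω ∉ {ω' | Z n ω' ≤ z} from h) _
      simp only [h1]; exact ramp_nonneg _ _ _
  have haem : ∀ᵐ ω ∂P, (P[(fun ω => ramp z δ (Z n ω)) | G n]) ω ≤
      condProb P (G n) {ω' | Z n ω' ≤ z} ω := by
    simp only [condProb]
    refine condExp_mono intm intind (Filter.Eventually.of_forall fun ω => ?_)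
    by_cases h : Z n ω ≤ z
    · have h1 : ({ω' | Z n ω' ≤ z}.indicator (fun _ => (1:ℝ))) ω = 1 :=
        Set.indicator_of_mem (show ω ∈ {ω' | Z n ω' ≤ z} from h) _
      simp only [h1]; exact ramp_le_one _ _ _
    · have h1 : ({ω' | Z n ω' ≤ z}.indicator (fun _ => (1:ℝ))) ω = 0 :=
        Set.indicator_of_notMem (show ω ∉ {ω' | Z n ω' ≤ z} from h) _
      simp only [h1]
      exact le_of_eq (ramp_eq_zero hδ (not_le.mp h).le)
  have hQ : P {ω | ¬(condProb P (G n) {ω' | Z n ω' ≤ z} ω ≤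
      (P[(fun ω => ramp (z + δ) δ (Z n ω)) | G n]) ω ∧
      (P[(fun ω => ramp z δ (Z n ω)) | G n]) ω ≤
      condProb P (G n) {ω' | Z n ω' ≤ z} ω)} = 0 :=
    ae_iff.mp (haep.and haem)
  calc P {ω | ε < |condProb P (G n) {ω' | Z n ω' ≤ z} ω - (ν (Set.Iic z)).toReal|}
      ≤ P (({ω | ε / 2 < |(P[(fun ω => ramp (z + δ) δ (Z n ω)) | G n]) ω -
            ∫ x, ramp (z + δ) δ x ∂ν|} ∪
          {ω | ε / 2 < |(P[(fun ω => ramp z δ (Z n ω)) | G n]) ω -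
            ∫ x, ramp z δ x ∂ν|}) ∪
          {ω | ¬(condProb P (G n) {ω' | Z n ω' ≤ z} ω ≤
            (P[(fun ω => ramp (z + δ) δ (Z n ω)) | G n]) ω ∧
            (P[(fun ω => ramp z δ (Z n ω)) | G n]) ω ≤
            condProb P (G n) {ω' | Z n ω' ≤ z} ω)}) := by
        refine measure_mono fun ω hω => ?_
        simp only [Set.mem_setOf_eq] at hω
        by_cases hq : condProb P (G n) {ω' | Z n ω' ≤ z} ω ≤
            (P[(fun ω => ramp (z + δ) δ (Z n ω)) | G n]) ω ∧
            (P[(fun ω => ramp z δ (Z n ω)) | G n]) ω ≤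
            condProb P (G n) {ω' | Z n ω' ≤ z} ω
        · left
          by_contra hcon
          simp only [Set.mem_union, Set.mem_setOf_eq, not_or, not_lt] at hcon
          have h1 := abs_le.mp hcon.1
          have h2 := abs_le.mp hcon.2
          have hle : |condProb P (G n) {ω' | Z n ω' ≤ z} ω -
              (ν (Set.Iic z)).toReal| ≤ ε :=
            abs_le.mpr ⟨by linarith [hq.2, h2.1, hIm2, hlo], by linarith [hq.1, h1.2, hIp1, hup]⟩
          exact absurd hω (not_lt.mpr hle)
        · right; exact hq
    _ ≤ (P {ω | ε / 2 < |(P[(fun ω => ramp (z + δ) δ (Z n ω)) | G n]) ω -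
            ∫ x, ramp (z + δ) δ x ∂ν|} +
          P {ω | ε / 2 < |(P[(fun ω => ramp z δ (Z n ω)) | G n]) ω -
            ∫ x, ramp z δ x ∂ν|}) := by
        refine le_trans (measure_union_le _ _) ?_
        rw [hQ, add_zero]
        exact measure_union_le _ _

lemma grid_exists (ν : Measure ℝ) [IsProbabilityMeasure ν]
    (hcont : ∀ z : ℝ, ContinuousAt (fun t => (ν (Set.Iic t)).toReal) z)
    {ε : ℝ} (hε : 0 < ε) :
    ∃ s : Finset ℝ, s.Nonempty ∧ ∀ z : ℝ,
      ((∃ b ∈ s, z ≤ b ∧ (ν (Set.Iic b)).toReal ≤ (ν (Set.Iic z)).toReal + ε) ∨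
        1 - ε ≤ (ν (Set.Iic z)).toReal) ∧
      ((∃ a ∈ s, a ≤ z ∧ (ν (Set.Iic z)).toReal ≤ (ν (Set.Iic a)).toReal + ε) ∨
        (ν (Set.Iic z)).toReal ≤ ε) := by
  set Gc : ℝ → ℝ := fun t => (ν (Set.Iic t)).toReal with hGcdef
  have hmono : Monotone Gc := fun x y hxy =>
    ENNReal.toReal_mono (measure_ne_top ν _) (measure_mono (Set.Iic_subset_Iic.mpr hxy))
  have hGc0 : ∀ t, 0 ≤ Gc t := fun t => ENNReal.toReal_nonneg
  have hGc1 : ∀ t, Gc t ≤ 1 := by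
    intro t
    have h := ENNReal.toReal_mono (measure_ne_top ν Set.univ)
      (measure_mono (Set.subset_univ (Set.Iic t)))
    rwa [measure_univ, ENNReal.toReal_one] at h
  have h1 : Tendsto Gc atTop (𝓝 1) := by
    have h := tendsto_measure_Iic_atTop ν
    have h2 := (ENNReal.tendsto_toReal (measure_ne_top ν Set.univ)).comp h
    simpa [Function.comp_def, measure_univ] using h2
  have h0 : Tendsto Gc atBot (𝓝 0) := by
    have hI : ⋂ x : ℝ, Set.Iic x = ∅ := by
      ext t
      simp only [Set.mem_iInter, Set.mem_Iic, Set.mem_empty_iff_false, iff_false, not_forall]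
      exact ⟨t - 1, by linarith⟩
    have h := tendsto_measure_iInter_atBot (μ := ν) (s := fun x : ℝ => Set.Iic x)
      (fun i => measurableSet_Iic.nullMeasurableSet) monotone_Iic ⟨0, measure_ne_top ν _⟩
    rw [hI] at h
    have h2 := (ENNReal.tendsto_toReal (by simp : (ν ∅) ≠ ⊤)).comp h
    simpa [Function.comp_def] using h2
  obtain ⟨a, ha⟩ := (h0.eventually_lt_const hε).exists
  obtain ⟨b0, hb0⟩ := (h1.eventually_const_lt (by linarith : 1 - ε < 1)).exists
  set b := max a b0 with hbdef
  have hab : a ≤ b := le_max_left _ _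
  have hb : 1 - ε < Gc b := lt_of_lt_of_le hb0 (hmono (le_max_right _ _))
  have hcG : Continuous Gc := continuous_iff_continuousAt.mpr hcont
  have hUC := (isCompact_Icc (a := a) (b := b + 1)).uniformContinuousOn_of_continuous
    hcG.continuousOn
  obtain ⟨δ₁, hδ₁, hδuc⟩ := Metric.uniformContinuousOn_iff_le.mp hUC ε hε
  set δ := min δ₁ 1 with hδdef
  have hδ : 0 < δ := lt_min hδ₁ one_pos
  have hδ1 : δ ≤ 1 := min_le_right _ _
  have hδδ₁ : δ ≤ δ₁ := min_le_left _ _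
  set m := ⌈(b - a) / δ⌉₊ with hmdef
  have hm1 : b - a ≤ m * δ := by
    have h := Nat.le_ceil ((b - a) / δ)
    calc b - a = (b - a) / δ * δ := by field_simp
      _ ≤ m * δ := mul_le_mul_of_nonneg_right h hδ.le
  have hm2 : (m : ℝ) * δ ≤ b - a + 1 := by
    have h := (Nat.ceil_lt_add_one (show (0:ℝ) ≤ (b - a) / δ from div_nonneg (by linarith) hδ.le)).le
    calc (m : ℝ) * δ ≤ ((b - a) / δ + 1) * δ := mul_le_mul_of_nonneg_right h hδ.le
      _ = (b - a) + δ := by field_simp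
      _ ≤ b - a + 1 := by linarith
  have hJ : ∀ j : ℕ, j ≤ m → a + j * δ ∈ Set.Icc a (b + 1) := by
    intro j hj
    have hj' : (j : ℝ) * δ ≤ m * δ :=
      mul_le_mul_of_nonneg_right (by exact_mod_cast hj) hδ.le
    have hj0 : (0:ℝ) ≤ (j : ℝ) * δ := mul_nonneg (Nat.cast_nonneg j) hδ.le
    exact ⟨by linarith, by linarith⟩
  have hain : a ∈ (Finset.range (m + 1)).image (fun j : ℕ => a + j * δ) :=
    Finset.mem_image.mpr ⟨0, Finset.mem_range.mpr (Nat.succ_pos m), by simp⟩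
  refine ⟨(Finset.range (m + 1)).image (fun j : ℕ => a + j * δ), ⟨a, hain⟩, fun z => ?_⟩
  constructor
  · by_cases htop : 1 - ε ≤ Gc z
    · exact Or.inr htop
    push_neg at htop
    have hzT : z < a + m * δ := by
      by_contra hzT
      push_neg at hzT
      have : Gc b ≤ Gc z := hmono (by linarith)
      linarith
    by_cases hza : z < a
    · exact Or.inl ⟨a, hain, hza.le, by linarith [hGc0 z]⟩
    push_neg at hza
    set j := ⌊(z - a) / δ⌋₊ with hjdef
    have hj0 : (j : ℝ) ≤ (z - a) / δ := Nat.floor_le (div_nonneg (by linarith) hδ.le)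
    have hj0' : (j : ℝ) * δ ≤ z - a := by
      rw [← le_div_iff₀ hδ]; exact hj0
    have hj1 : (z - a) / δ < j + 1 := Nat.lt_floor_add_one _
    have hj1' : z - a < ((j : ℝ) + 1) * δ := by
      rw [← div_lt_iff₀ hδ]; exact hj1
    have hjm : j + 1 ≤ m := by
      have hx : (z - a) / δ < m := by rw [div_lt_iff₀ hδ]; linarith
      have hjm' : (j : ℝ) < m := lt_of_le_of_lt hj0 hx
      exact Nat.succ_le_of_lt (by exact_mod_cast hjm')
    refine Or.inl ⟨a + ((j : ℝ) + 1) * δ, ?_, by linarith, ?_⟩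
    · exact Finset.mem_image.mpr ⟨j + 1, Finset.mem_range.mpr (by omega), by push_cast; ring⟩
    · have hmem1 : z ∈ Set.Icc a (b + 1) := ⟨hza, by linarith⟩
      have hmem2 : a + ((j : ℝ) + 1) * δ ∈ Set.Icc a (b + 1) := by
        have := hJ (j + 1) hjm
        push_cast at this ⊢
        exact this
      have hdist : dist (a + ((j : ℝ) + 1) * δ) z ≤ δ₁ := by
        rw [Real.dist_eq, abs_of_nonneg (by linarith)]
        have : ((j : ℝ) + 1) * δ = (j : ℝ) * δ + δ := by ring
        linarith [hδδ₁]
      have h := hδuc _ hmem2 _ hmem1 hdist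
      rw [Real.dist_eq] at h
      linarith [(abs_le.mp h).2]
  · by_cases hbot : Gc z ≤ ε
    · exact Or.inr hbot
    push_neg at hbot
    have hza : a ≤ z := by
      by_contra hza
      push_neg at hza
      have : Gc z ≤ Gc a := hmono hza.le
      linarith
    by_cases hzT : a + m * δ ≤ z
    · refine Or.inl ⟨a + (m : ℝ) * δ, ?_, hzT, ?_⟩
      · exact Finset.mem_image.mpr ⟨m, Finset.mem_range.mpr (by omega), rfl⟩
      · have : Gc b ≤ Gc (a + m * δ) := hmono (by linarith)
        linarith [hGc1 z]
    push_neg at hzT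
    set j := ⌊(z - a) / δ⌋₊ with hjdef
    have hj0 : (j : ℝ) ≤ (z - a) / δ := Nat.floor_le (div_nonneg (by linarith) hδ.le)
    have hj0' : (j : ℝ) * δ ≤ z - a := by rw [← le_div_iff₀ hδ]; exact hj0
    have hj1 : (z - a) / δ < j + 1 := Nat.lt_floor_add_one _
    have hj1' : z - a < ((j : ℝ) + 1) * δ := by rw [← div_lt_iff₀ hδ]; exact hj1
    have hjm : j ≤ m := by
      have hx : (z - a) / δ < m := by rw [div_lt_iff₀ hδ]; linarith
      have hjm' : (j : ℝ) < m := lt_of_le_of_lt hj0 hx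
      exact (by exact_mod_cast hjm' : j < m).le
    refine Or.inl ⟨a + (j : ℝ) * δ, ?_, by linarith, ?_⟩
    · exact Finset.mem_image.mpr ⟨j, Finset.mem_range.mpr (by omega), rfl⟩
    · have hmem1 : z ∈ Set.Icc a (b + 1) := ⟨hza, by linarith⟩
      have hmem2 : a + (j : ℝ) * δ ∈ Set.Icc a (b + 1) := hJ j hjm
      have hdist : dist z (a + (j : ℝ) * δ) ≤ δ₁ := by
        rw [Real.dist_eq, abs_of_nonneg (by linarith)]
        linarith [hδδ₁]
      have h := hδuc _ hmem1 _ hmem2 hdist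
      rw [Real.dist_eq] at h
      linarith [(abs_le.mp h).2]

/-- If `Z_n →d* ν` with everywhere-continuous CDF `G`, then for any countable dense
`D ⊆ ℝ`, `sup_{z ∈ D} |G*_n(z) - G(z)| →P 0`. -/
theorem stmt1 {Ω : Type*} [m0 : MeasurableSpace Ω] (P : Measure Ω)
    [IsProbabilityMeasure P] (G : ℕ → MeasurableSpace Ω) (hG : ∀ n, G n ≤ m0)
    (Z : ℕ → Ω → ℝ) (hZ : ∀ n, Measurable (Z n))
    (ν : Measure ℝ) [IsProbabilityMeasure ν]
    (hconv : CondConvInDist P G Z ν)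
    (hcont : ∀ z : ℝ, ContinuousAt (fun t => (ν (Set.Iic t)).toReal) z)
    (D : Set ℝ) (hDc : D.Countable) (hDd : Dense D) :
    TendstoInProb P
      (fun n ω => ⨆ z : D,
        |condProb P (G n) {ω' | Z n ω' ≤ (z : ℝ)} ω - (ν (Set.Iic (z : ℝ))).toReal|)
      (fun _ => 0) := by
  intro ε hε
  have hε2 : 0 < ε / 2 := by linarith
  obtain ⟨s, hsne, hgrid⟩ := grid_exists ν hcont hε2
  have hpt : ∀ y : ℝ, Tendsto (fun n => P {ω | ε / 2 <
      |condProb P (G n) {ω' | Z n ω' ≤ y} ω - (ν (Set.Iic y)).toReal|}) atTop (𝓝 0) :=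
    fun y => pointwise_conv P G Z hZ ν hconv hcont y (ε / 2) hε2
  have key : ∀ n, P {ω | ε < |(⨆ z : D,
        |condProb P (G n) {ω' | Z n ω' ≤ (z : ℝ)} ω - (ν (Set.Iic (z : ℝ))).toReal|) - 0|}
      ≤ ∑ y ∈ s, P {ω | ε / 2 <
        |condProb P (G n) {ω' | Z n ω' ≤ y} ω - (ν (Set.Iic y)).toReal|} := by
    intro n
    have intind : ∀ u : ℝ, Integrable ({ω' | Z n ω' ≤ u}.indicator (fun _ => (1:ℝ))) P :=
      fun u => (integrable_const 1).indicator (hZ n measurableSet_Iic)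
    have hmono_ae : ∀ u v : ℝ, u ≤ v → ∀ᵐ ω ∂P,
        condProb P (G n) {ω' | Z n ω' ≤ u} ω ≤ condProb P (G n) {ω' | Z n ω' ≤ v} ω := by
      intro u v huv
      simp only [condProb]
      refine condExp_mono (intind u) (intind v) (Filter.Eventually.of_forall fun ω => ?_)
      exact Set.indicator_le_indicator_of_subset (fun x hx => le_trans hx huv)
        (fun _ => zero_le_one) ω
    have h01 : ∀ u : ℝ, ∀ᵐ ω ∂P, 0 ≤ condProb P (G n) {ω' | Z n ω' ≤ u} ω ∧
        condProb P (G n) {ω' | Z n ω' ≤ u} ω ≤ 1 := by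
      intro u
      have hn : ∀ᵐ ω ∂P, 0 ≤ condProb P (G n) {ω' | Z n ω' ≤ u} ω := by
        simp only [condProb]
        exact condExp_nonneg (Filter.Eventually.of_forall fun ω =>
          Set.indicator_nonneg (fun _ _ => zero_le_one) ω)
      have hl : ∀ᵐ ω ∂P, condProb P (G n) {ω' | Z n ω' ≤ u} ω ≤ 1 := by
        simp only [condProb]
        have h2 := condExp_mono (μ := P) (m := G n) (intind u) (integrable_const (1:ℝ))
          (Filter.Eventually.of_forall fun ω =>
            Set.indicator_le_self' (fun _ _ => zero_le_one) ω)
        rw [condExp_const (hG n)] at h2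
        exact h2
      exact hn.and hl
    have hQ : ∀ᵐ ω ∂P, ∀ z ∈ D,
        (0 ≤ condProb P (G n) {ω' | Z n ω' ≤ z} ω ∧
          condProb P (G n) {ω' | Z n ω' ≤ z} ω ≤ 1) ∧
        ∀ y ∈ (s : Set ℝ),
          (z ≤ y → condProb P (G n) {ω' | Z n ω' ≤ z} ω ≤
            condProb P (G n) {ω' | Z n ω' ≤ y} ω) ∧
          (y ≤ z → condProb P (G n) {ω' | Z n ω' ≤ y} ω ≤
            condProb P (G n) {ω' | Z n ω' ≤ z} ω) := by
      rw [ae_ball_iff hDc]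
      intro z hz
      refine (h01 z).and ?_
      rw [ae_ball_iff s.countable_toSet]
      intro y hy
      have hA : ∀ᵐ ω ∂P, z ≤ y → condProb P (G n) {ω' | Z n ω' ≤ z} ω ≤
          condProb P (G n) {ω' | Z n ω' ≤ y} ω := by
        by_cases hzy : z ≤ y
        · exact (hmono_ae z y hzy).mono fun ω h _ => h
        · exact Filter.Eventually.of_forall fun ω h => absurd h hzy
      have hB : ∀ᵐ ω ∂P, y ≤ z → condProb P (G n) {ω' | Z n ω' ≤ y} ω ≤
          condProb P (G n) {ω' | Z n ω' ≤ z} ω := by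
        by_cases hzy : y ≤ z
        · exact (hmono_ae y z hzy).mono fun ω h _ => h
        · exact Filter.Eventually.of_forall fun ω h => absurd h hzy
      exact hA.and hB
    have hQ0 := ae_iff.mp hQ
    calc P {ω | ε < |(⨆ z : D,
          |condProb P (G n) {ω' | Z n ω' ≤ (z : ℝ)} ω - (ν (Set.Iic (z : ℝ))).toReal|) - 0|}
        ≤ P ((⋃ y ∈ s, {ω | ε / 2 <
            |condProb P (G n) {ω' | Z n ω' ≤ y} ω - (ν (Set.Iic y)).toReal|}) ∪
          {ω | ¬ ∀ z ∈ D,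
            (0 ≤ condProb P (G n) {ω' | Z n ω' ≤ z} ω ∧
              condProb P (G n) {ω' | Z n ω' ≤ z} ω ≤ 1) ∧
            ∀ y ∈ (s : Set ℝ),
              (z ≤ y → condProb P (G n) {ω' | Z n ω' ≤ z} ω ≤
                condProb P (G n) {ω' | Z n ω' ≤ y} ω) ∧
              (y ≤ z → condProb P (G n) {ω' | Z n ω' ≤ y} ω ≤
                condProb P (G n) {ω' | Z n ω' ≤ z} ω)}) := by
          refine measure_mono fun ω hω => ?_
          simp only [Set.mem_setOf_eq] at hω
          by_cases hq : ∀ z ∈ D,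
            (0 ≤ condProb P (G n) {ω' | Z n ω' ≤ z} ω ∧
              condProb P (G n) {ω' | Z n ω' ≤ z} ω ≤ 1) ∧
            ∀ y ∈ (s : Set ℝ),
              (z ≤ y → condProb P (G n) {ω' | Z n ω' ≤ z} ω ≤
                condProb P (G n) {ω' | Z n ω' ≤ y} ω) ∧
              (y ≤ z → condProb P (G n) {ω' | Z n ω' ≤ y} ω ≤
                condProb P (G n) {ω' | Z n ω' ≤ z} ω)
          · left
            by_contra hno
            simp only [Set.mem_iUnion, Set.mem_setOf_eq, not_exists, not_lt] at hno
            have hsup : (⨆ z : D,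
                |condProb P (G n) {ω' | Z n ω' ≤ (z : ℝ)} ω -
                  (ν (Set.Iic (z : ℝ))).toReal|) ≤ ε := by
              refine Real.iSup_le ?_ hε.le
              rintro ⟨z, hz⟩
              obtain ⟨⟨h0z, h1z⟩, hmon⟩ := hq z hz
              obtain ⟨hup, hlo⟩ := hgrid z
              have hupper : condProb P (G n) {ω' | Z n ω' ≤ z} ω -
                  (ν (Set.Iic z)).toReal ≤ ε := by
                rcases hup with ⟨b, hbs, hzb, hGb⟩ | h1ε
                · have h1 := (hmon b (Finset.mem_coe.mpr hbs)).1 hzb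
                  have h2 := hno b hbs
                  have h3 := (abs_le.mp h2).2
                  linarith
                · linarith
              have hlower : (ν (Set.Iic z)).toReal -
                  condProb P (G n) {ω' | Z n ω' ≤ z} ω ≤ ε := by
                rcases hlo with ⟨a, has, haz, hGa⟩ | h0ε
                · have h1 := (hmon a (Finset.mem_coe.mpr has)).2 haz
                  have h2 := hno a has
                  have h3 := (abs_le.mp h2).1
                  linarith
                · linarith
              exact abs_le.mpr ⟨by linarith, by linarith⟩
            have hnn : (0:ℝ) ≤ ⨆ z : D,
                |condProb P (G n) {ω' | Z n ω' ≤ (z : ℝ)} ω -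
                  (ν (Set.Iic (z : ℝ))).toReal| :=
              Real.iSup_nonneg fun z => abs_nonneg _
            rw [sub_zero, abs_of_nonneg hnn] at hω
            exact absurd hω (not_lt.mpr hsup)
          · right
            exact hq
      _ ≤ P (⋃ y ∈ s, {ω | ε / 2 <
            |condProb P (G n) {ω' | Z n ω' ≤ y} ω - (ν (Set.Iic y)).toReal|}) +
          P {ω | ¬ ∀ z ∈ D,
            (0 ≤ condProb P (G n) {ω' | Z n ω' ≤ z} ω ∧
              condProb P (G n) {ω' | Z n ω' ≤ z} ω ≤ 1) ∧
            ∀ y ∈ (s : Set ℝ),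
              (z ≤ y → condProb P (G n) {ω' | Z n ω' ≤ z} ω ≤
                condProb P (G n) {ω' | Z n ω' ≤ y} ω) ∧
              (y ≤ z → condProb P (G n) {ω' | Z n ω' ≤ y} ω ≤
                condProb P (G n) {ω' | Z n ω' ≤ z} ω)} := measure_union_le _ _
      _ = P (⋃ y ∈ s, {ω | ε / 2 <
            |condProb P (G n) {ω' | Z n ω' ≤ y} ω - (ν (Set.Iic y)).toReal|}) := by
          rw [hQ0, add_zero]
      _ ≤ ∑ y ∈ s, P {ω | ε / 2 <
            |condProb P (G n) {ω' | Z n ω' ≤ y} ω - (ν (Set.Iic y)).toReal|} :=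
          measure_biUnion_finset_le _ _
  have hsum : Tendsto (fun n => ∑ y ∈ s, P {ω | ε / 2 <
      |condProb P (G n) {ω' | Z n ω' ≤ y} ω - (ν (Set.Iic y)).toReal|}) atTop (𝓝 0) := by
    have h := tendsto_finset_sum s (fun y _ => hpt y)
    simpa using h
  exact tendsto_of_tendsto_of_tendsto_of_le_of_le tendsto_const_nhds hsum
    (fun n => zero_le) key
end
end

section
/- Let (Z_n) be real random variables with Z_n →d* ν. Then for every open set C ⊆ ℝ and every ε > 0, P( P(Z_n ∈ C | 𝒢_n) > ν(C) − ε ) → 1 as n → ∞. -/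
open MeasureTheory Filter Topology

noncomputable section

/-- A bounded Lipschitz minorant of the indicator of an open set whose integral
nearly reaches the measure of the set. -/
lemma exists_lipschitz_minorant (ν : Measure ℝ) [IsProbabilityMeasure ν]
    (C : Set ℝ) (hC : IsOpen C) (δ : ℝ) (hδ : 0 < δ) :
    ∃ h : ℝ → ℝ, (∃ K, LipschitzWith K h) ∧ (∀ x, |h x| ≤ 1) ∧
      (∀ x, h x ≤ C.indicator (fun _ => (1 : ℝ)) x) ∧
      (ν C).toReal - δ < ∫ x, h x ∂ν := by
  by_cases hne : Cᶜ.Nonempty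
  · set f : ℕ → ℝ → ℝ := fun k x => min 1 ((k : ℝ) * Metric.infDist x Cᶜ) with hf
    have hcont : ∀ k, Continuous (f k) := fun k =>
      continuous_const.min (continuous_const.mul (Metric.continuous_infDist_pt Cᶜ))
    have hnonneg : ∀ k x, 0 ≤ f k x := fun k x =>
      le_min zero_le_one (mul_nonneg (Nat.cast_nonneg k) Metric.infDist_nonneg)
    have hle1 : ∀ k x, f k x ≤ 1 := fun k x => min_le_left _ _
    have hptwise : ∀ x, Tendsto (fun k => f k x) atTop
        (nhds (C.indicator (fun _ => (1 : ℝ)) x)) := by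
      intro x
      by_cases hx : x ∈ C
      · have hd : 0 < Metric.infDist x Cᶜ :=
          (hC.isClosed_compl.notMem_iff_infDist_pos hne).1 (by simpa using hx)
        have hev : ∀ᶠ k : ℕ in atTop, f k x = 1 := by
          have h1 : Tendsto (fun k : ℕ => (k : ℝ) * Metric.infDist x Cᶜ) atTop atTop :=
            tendsto_natCast_atTop_atTop.atTop_mul_const hd
          filter_upwards [h1.eventually_ge_atTop 1] with k hk
          simp [hf, min_eq_left hk]
        rw [Set.indicator_of_mem hx]
        exact Tendsto.congr' (hev.mono fun k hk => hk.symm) tendsto_const_nhds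
      · have hd : Metric.infDist x Cᶜ = 0 := Metric.infDist_zero_of_mem (by simpa using hx)
        have : ∀ k : ℕ, f k x = 0 := fun k => by
          simp [hf, hd]
        rw [Set.indicator_of_notMem hx]
        exact Tendsto.congr (fun k => (this k).symm) tendsto_const_nhds
    have hint_tendsto : Tendsto (fun k => ∫ x, f k x ∂ν) atTop (nhds ((ν C).toReal)) := by
      have h1 : Tendsto (fun k => ∫ x, f k x ∂ν) atTop
          (nhds (∫ x, C.indicator (fun _ => (1 : ℝ)) x ∂ν)) := by
        refine tendsto_integral_of_dominated_convergence (fun _ => 1)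
          (fun k => (hcont k).aestronglyMeasurable) (integrable_const 1)
          (fun k => ae_of_all _ fun x => ?_) (ae_of_all _ hptwise)
        show |f k x| ≤ 1
        rw [abs_of_nonneg (hnonneg k x)]
        exact hle1 k x
      have h2 : ∫ x, C.indicator (fun _ => (1 : ℝ)) x ∂ν = (ν C).toReal := by
        exact integral_indicator_one hC.measurableSet
      rwa [h2] at h1
    have hlt : (ν C).toReal - δ < (ν C).toReal := by linarith
    obtain ⟨k, hk⟩ := (hint_tendsto.eventually (eventually_gt_nhds hlt)).exists
    refine ⟨f k, ⟨?_, ?_⟩, fun x => ?_, fun x => ?_, hk⟩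
    · exact 0 ⊔ (‖(k : ℝ)‖₊ * 1)
    · have hlip : LipschitzWith (‖(k : ℝ)‖₊ * 1)
          (fun x => (k : ℝ) * Metric.infDist x Cᶜ) := by
        have := (lipschitzWith_smul (β := ℝ) (k : ℝ)).comp (Metric.lipschitz_infDist_pt Cᶜ)
        simpa [smul_eq_mul, Function.comp_def] using this
      exact (LipschitzWith.const (1 : ℝ)).min hlip
    · rw [abs_le]; exact ⟨by linarith [hnonneg k x], hle1 k x⟩
    · by_cases hx : x ∈ C
      · rw [Set.indicator_of_mem hx]; exact hle1 k x
      · rw [Set.indicator_of_notMem hx]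
        have hd : Metric.infDist x Cᶜ = 0 := Metric.infDist_zero_of_mem (by simpa using hx)
        simp [hf, hd]
  · have hCuniv : C = Set.univ := by
      rw [Set.not_nonempty_iff_eq_empty] at hne
      simpa [Set.compl_empty_iff] using hne
    refine ⟨fun _ => 1, ⟨0, LipschitzWith.const 1⟩, fun x => by norm_num,
      fun x => ?_, ?_⟩
    · rw [hCuniv, Set.indicator_of_mem (Set.mem_univ x)]
    · have : ∫ _ : ℝ, (1 : ℝ) ∂ν = 1 := by simp
      rw [this, hCuniv]
      simp
      linarith

/-- If `Z_n →d* ν`, then for every open `C ⊆ ℝ` and `ε > 0`,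
`P( P(Z_n ∈ C | 𝒢_n) > ν(C) − ε ) → 1`. -/
theorem stmt2 {Ω : Type*} [m0 : MeasurableSpace Ω] (P : Measure Ω)
    [IsProbabilityMeasure P] (G : ℕ → MeasurableSpace Ω) (hG : ∀ n, G n ≤ m0)
    (Z : ℕ → Ω → ℝ) (hZ : ∀ n, Measurable (Z n))
    (ν : Measure ℝ) [IsProbabilityMeasure ν]
    (hconv : CondConvInDist P G Z ν)
    (C : Set ℝ) (hC : IsOpen C) (ε : ℝ) (hε : 0 < ε) :
    Tendsto (fun n => P {ω | (ν C).toReal - ε < condProb P (G n) {ω' | Z n ω' ∈ C} ω})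
      atTop (nhds 1) := by
  obtain ⟨h, hLip, hbd, hind, hgt⟩ := exists_lipschitz_minorant ν C hC (ε / 2) (by linarith)
  set c : ℝ := ∫ x, h x ∂ν with hc
  set X : ℕ → Ω → ℝ := fun n => P[(fun ω => h (Z n ω)) | G n] with hX
  have hT : Tendsto (fun n => P {ω | ε / 2 < |X n ω - c|}) atTop (nhds 0) :=
    hconv h hLip ⟨1, hbd⟩ (ε / 2) (by linarith)
  set S : ℕ → Set Ω := fun n =>
    {ω | (ν C).toReal - ε < condProb P (G n) {ω' | Z n ω' ∈ C} ω} with hS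
  have hcontℝ : Continuous h := by
    obtain ⟨K, hK⟩ := hLip; exact hK.continuous
  have hmono : ∀ n, X n ≤ᵐ[P] condProb P (G n) {ω' | Z n ω' ∈ C} := by
    intro n
    have hset : MeasurableSet {ω' | Z n ω' ∈ C} := hZ n hC.measurableSet
    have hint1 : Integrable (fun ω => h (Z n ω)) P := by
      refine Integrable.mono' (integrable_const 1)
        ((hcontℝ.measurable.comp (hZ n)).aestronglyMeasurable) (ae_of_all _ fun ω => ?_)
      exact hbd (Z n ω)
    have hint2 : Integrable ({ω' | Z n ω' ∈ C}.indicator (fun _ => (1 : ℝ))) P := by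
      refine Integrable.mono' (integrable_const 1)
        ((measurable_const.indicator hset).aestronglyMeasurable) (ae_of_all _ fun ω => ?_)
      by_cases hω : ω ∈ {ω' | Z n ω' ∈ C} <;> simp [hω]
    exact condExp_mono hint1 hint2 (ae_of_all _ fun ω => by
      show h (Z n ω) ≤ {ω' | Z n ω' ∈ C}.indicator (fun _ => (1 : ℝ)) ω
      by_cases hω : Z n ω ∈ C
      · rw [Set.indicator_of_mem (show ω ∈ {ω' | Z n ω' ∈ C} from hω)]
        have := hind (Z n ω)
        rwa [Set.indicator_of_mem hω] at this
      · rw [Set.indicator_of_notMem (show ω ∉ {ω' | Z n ω' ∈ C} from hω)]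
        have := hind (Z n ω)
        rwa [Set.indicator_of_notMem hω] at this)
  have hSmeas : ∀ n, MeasurableSet (S n) := by
    intro n
    exact measurableSet_lt measurable_const
      ((stronglyMeasurable_condExp.mono (hG n)).measurable)
  have hbound : ∀ n, P (S n)ᶜ ≤ P {ω | ε / 2 < |X n ω - c|} := by
    intro n
    have hNull : P {ω | ¬ X n ω ≤ condProb P (G n) {ω' | Z n ω' ∈ C} ω} = 0 :=
      ae_iff.mp (hmono n)
    have hsub : (S n)ᶜ ⊆ {ω | ε / 2 < |X n ω - c|} ∪
        {ω | ¬ X n ω ≤ condProb P (G n) {ω' | Z n ω' ∈ C} ω} := by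
      intro ω hω
      simp only [hS, Set.mem_compl_iff, Set.mem_setOf_eq, not_lt] at hω
      by_cases h1 : ε / 2 < |X n ω - c|
      · exact Or.inl h1
      · refine Or.inr fun h2 => ?_
        push_neg at h1
        have h3 := (abs_le.mp h1).1
        change X n ω ≤ condProb P (G n) {ω' | Z n ω' ∈ C} ω at h2
        linarith
    calc P (S n)ᶜ ≤ P ({ω | ε / 2 < |X n ω - c|} ∪
        {ω | ¬ X n ω ≤ condProb P (G n) {ω' | Z n ω' ∈ C} ω}) := measure_mono hsub
      _ ≤ P {ω | ε / 2 < |X n ω - c|} +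
          P {ω | ¬ X n ω ≤ condProb P (G n) {ω' | Z n ω' ∈ C} ω} := measure_union_le _ _
      _ = P {ω | ε / 2 < |X n ω - c|} := by rw [hNull, add_zero]
  have hcompl : Tendsto (fun n => P (S n)ᶜ) atTop (nhds 0) :=
    tendsto_of_tendsto_of_tendsto_of_le_of_le tendsto_const_nhds hT
      (fun n => zero_le) hbound
  have hfinal : Tendsto (fun n => 1 - P (S n)ᶜ) atTop (nhds (1 - 0)) :=
    ENNReal.Tendsto.sub tendsto_const_nhds hcompl (Or.inl ENNReal.one_ne_top)
  rw [tsub_zero] at hfinal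
  refine hfinal.congr fun n => ?_
  show 1 - P (S n)ᶜ = P (S n)
  rw [prob_compl_eq_one_sub (hSmeas n), ENNReal.sub_sub_cancel ENNReal.one_ne_top prob_le_one]
end
end

section
/- Let (Z_n) be real random variables with Z_n →d* ν. Then for every Borel set C ⊆ ℝ whose ν-boundary is null, i.e. ν( closure(C) \ interior(C) ) = 0, the random variables P(Z_n ∈ C | 𝒢_n) converge in probability to the constant ν(C) as n → ∞. -/
open MeasureTheory Filter Topology

noncomputable section

/-- A Lipschitz approximation of the indicator of `E` from above. -/
def auxFn (δ : ℝ) (E : Set ℝ) (x : ℝ) : ℝ := max (1 - Metric.infDist x E / δ) 0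

lemma auxFn_nonneg (δ : ℝ) (E : Set ℝ) (x : ℝ) : 0 ≤ auxFn δ E x := le_max_right _ _

lemma auxFn_le_one {δ : ℝ} (hδ : 0 < δ) (E : Set ℝ) (x : ℝ) : auxFn δ E x ≤ 1 :=
  max_le (sub_le_self _ (div_nonneg Metric.infDist_nonneg hδ.le)) zero_le_one

lemma auxFn_lipschitz {δ : ℝ} (hδ : 0 < δ) (E : Set ℝ) :
    LipschitzWith ⟨δ⁻¹, by positivity⟩ (auxFn δ E) := by
  apply LipschitzWith.of_dist_le_mul
  intro x y
  have h1 := (Metric.lipschitz_infDist_pt E).dist_le_mul x y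
  simp only [NNReal.coe_one, one_mul] at h1
  have h2 : dist (auxFn δ E x) (auxFn δ E y)
      ≤ |(1 - Metric.infDist x E / δ) - (1 - Metric.infDist y E / δ)| := by
    rw [Real.dist_eq]
    exact abs_max_sub_max_le_abs _ _ _
  have h3 : |(1 - Metric.infDist x E / δ) - (1 - Metric.infDist y E / δ)|
      = |Metric.infDist x E - Metric.infDist y E| / δ := by
    have : (1 - Metric.infDist x E / δ) - (1 - Metric.infDist y E / δ)
        = (Metric.infDist y E - Metric.infDist x E) / δ := by ring
    rw [this, abs_div, abs_of_pos hδ, abs_sub_comm]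
  rw [Real.dist_eq] at h1
  calc dist (auxFn δ E x) (auxFn δ E y)
      ≤ |Metric.infDist x E - Metric.infDist y E| / δ := by rw [← h3]; exact h2
    _ ≤ dist x y / δ := by gcongr
    _ = ↑(⟨δ⁻¹, by positivity⟩ : NNReal) * dist x y := by
        simp [NNReal.coe_mk, div_eq_inv_mul]

lemma indicator_le_auxFn {δ : ℝ} (hδ : 0 < δ) (E : Set ℝ) (x : ℝ) :
    E.indicator (fun _ => (1 : ℝ)) x ≤ auxFn δ E x := by
  by_cases h : x ∈ E
  · rw [Set.indicator_of_mem h]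
    simp [auxFn, Metric.infDist_zero_of_mem h]
  · rw [Set.indicator_of_notMem h]
    exact auxFn_nonneg δ E x

lemma auxFn_le_indicator {δ : ℝ} (hδ : 0 < δ) {E : Set ℝ} (hE : E.Nonempty) (x : ℝ) :
    auxFn δ E x ≤ (Metric.thickening δ E).indicator (fun _ => (1 : ℝ)) x := by
  by_cases h : x ∈ Metric.thickening δ E
  · rw [Set.indicator_of_mem h]; exact auxFn_le_one hδ E x
  · rw [Set.indicator_of_notMem h]
    have hd : δ ≤ Metric.infDist x E :=
      not_lt.mp (fun hc => h ((Metric.mem_thickening_iff_infDist_lt hE).mpr hc))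
    apply le_of_eq
    simp only [auxFn, max_eq_right_iff]
    rw [sub_nonpos, le_div_iff₀ hδ, one_mul]
    exact hd

lemma lipschitzWith_one_sub {K : NNReal} {h : ℝ → ℝ} (hl : LipschitzWith K h) :
    LipschitzWith K (fun x => 1 - h x) := by
  apply LipschitzWith.of_dist_le_mul
  intro x y
  have e : (1 - h x) - (1 - h y) = -(h x - h y) := by ring
  rw [Real.dist_eq, e, abs_neg, ← Real.dist_eq]
  exact hl.dist_le_mul x y

/-- If `Z_n →d* ν` and `C` is a Borel set with `ν(∂C) = 0` (where
`∂C = closure C \ interior C`), then `P(Z_n ∈ C | 𝒢_n) →P ν(C)`. -/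
theorem stmt4 {Ω : Type*} [m0 : MeasurableSpace Ω] (P : Measure Ω)
    [IsProbabilityMeasure P] (G : ℕ → MeasurableSpace Ω) (hG : ∀ n, G n ≤ m0)
    (Z : ℕ → Ω → ℝ) (hZ : ∀ n, Measurable (Z n))
    (ν : Measure ℝ) [IsProbabilityMeasure ν]
    (hconv : CondConvInDist P G Z ν)
    (C : Set ℝ) (hC : MeasurableSet C)
    (hbd : ν (closure C \ interior C) = 0) :
    TendstoInProb P (fun n => condProb P (G n) {ω | Z n ω ∈ C})
      (fun _ => (ν C).toReal) := by
  intro ε hε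
  rcases Set.eq_empty_or_nonempty C with rfl | hCne
  · refine Filter.Tendsto.congr (f₁ := fun _ => (0 : ENNReal)) (fun n => ?_) tendsto_const_nhds
    have h1 : {ω' | Z n ω' ∈ (∅ : Set ℝ)} = (∅ : Set Ω) := by simp
    have h2 : condProb P (G n) (∅ : Set Ω) = 0 := by
      rw [condProb, show (∅ : Set Ω).indicator (fun _ => (1 : ℝ)) = (0 : Ω → ℝ) by funext ω; simp]
      exact condExp_zero
    have h3 : {ω | ε < |condProb P (G n) {ω' | Z n ω' ∈ (∅ : Set ℝ)} ω
        - (fun _ : Ω => (ν (∅ : Set ℝ)).toReal) ω|} = (∅ : Set Ω) := by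
      ext ω
      simp [h1, h2, not_lt, hε.le]
    rw [h3, measure_empty]
  by_cases hCcne : Cᶜ = ∅
  · have hCuniv : C = Set.univ := by rwa [Set.compl_empty_iff] at hCcne
    subst hCuniv
    refine Filter.Tendsto.congr (f₁ := fun _ => (0 : ENNReal)) (fun n => ?_) tendsto_const_nhds
    have h1 : {ω' | Z n ω' ∈ (Set.univ : Set ℝ)} = (Set.univ : Set Ω) := by simp
    have h2 : condProb P (G n) (Set.univ : Set Ω) = fun _ => (1 : ℝ) := by
      rw [condProb, Set.indicator_univ]
      exact condExp_const (hG n) 1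
    have h3 : {ω | ε < |condProb P (G n) {ω' | Z n ω' ∈ (Set.univ : Set ℝ)} ω
        - (fun _ : Ω => (ν (Set.univ : Set ℝ)).toReal) ω|} = (∅ : Set Ω) := by
      ext ω
      simp [h1, h2, not_lt, hε.le]
    rw [h3, measure_empty]
  have hCcne' : Set.Nonempty Cᶜ := Set.nonempty_iff_ne_empty.mpr hCcne
  -- the measures of closure, interior and C agree
  have hcl_le : ν (closure C) ≤ ν (interior C) := by
    calc ν (closure C) ≤ ν (interior C ∪ (closure C \ interior C)) :=
          measure_mono (fun x hx => by
            by_cases h : x ∈ interior C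
            exacts [Or.inl h, Or.inr ⟨hx, h⟩])
      _ ≤ ν (interior C) + ν (closure C \ interior C) := measure_union_le _ _
      _ = ν (interior C) := by rw [hbd, add_zero]
  have hint : ν (interior C) = ν C :=
    le_antisymm (measure_mono interior_subset)
      ((measure_mono subset_closure).trans hcl_le)
  have hcl : ν (closure C) = ν C :=
    le_antisymm (hcl_le.trans (measure_mono interior_subset)) (measure_mono subset_closure)
  -- choose δ₁ for the upper approximation
  have hth1 : Tendsto (fun r => (ν (Metric.thickening r C)).toReal) (𝓝[>] (0 : ℝ))
      (𝓝 (ν C).toReal) := by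
    have h := tendsto_measure_thickening (μ := ν) (s := C) ⟨1, one_pos, measure_ne_top ν _⟩
    rw [hcl] at h
    exact (ENNReal.tendsto_toReal (measure_ne_top ν C)).comp h
  obtain ⟨δ₁, hδ₁, hδ₁pos⟩ :
      ∃ δ, (ν (Metric.thickening δ C)).toReal < (ν C).toReal + ε / 2 ∧ 0 < δ :=
    ((hth1.eventually_lt_const (by linarith : (ν C).toReal < (ν C).toReal + ε / 2)).and
      self_mem_nhdsWithin).exists
  -- choose δ₂ for the lower approximation
  have hcompl : (ν (closure Cᶜ)).toReal = 1 - (ν C).toReal := by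
    rw [closure_compl, prob_compl_eq_one_sub isOpen_interior.measurableSet,
      ENNReal.toReal_sub_of_le prob_le_one ENNReal.one_ne_top, ENNReal.toReal_one, hint]
  have hth2 : Tendsto (fun r => (ν (Metric.thickening r Cᶜ)).toReal) (𝓝[>] (0 : ℝ))
      (𝓝 (1 - (ν C).toReal)) := by
    have h := tendsto_measure_thickening (μ := ν) (s := Cᶜ) ⟨1, one_pos, measure_ne_top ν _⟩
    have h2 := (ENNReal.tendsto_toReal (measure_ne_top ν (closure Cᶜ))).comp h
    rwa [hcompl] at h2
  obtain ⟨δ₂, hδ₂, hδ₂pos⟩ :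
      ∃ δ, (ν (Metric.thickening δ Cᶜ)).toReal < 1 - (ν C).toReal + ε / 2 ∧ 0 < δ :=
    ((hth2.eventually_lt_const
      (by linarith : 1 - (ν C).toReal < 1 - (ν C).toReal + ε / 2)).and
      self_mem_nhdsWithin).exists
  set f : ℝ → ℝ := auxFn δ₁ C with hf_def
  set g : ℝ → ℝ := fun x => 1 - auxFn δ₂ Cᶜ x with hg_def
  -- basic properties of f and g
  have hf_lip : LipschitzWith _ f := auxFn_lipschitz hδ₁pos C
  have hg_lip : LipschitzWith _ g := lipschitzWith_one_sub (auxFn_lipschitz hδ₂pos Cᶜ)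
  have hf_meas : Measurable f := hf_lip.continuous.measurable
  have hg_meas : Measurable g := hg_lip.continuous.measurable
  have hf_bd : ∀ x, |f x| ≤ 1 := fun x =>
    abs_le.mpr ⟨by linarith [auxFn_nonneg δ₁ C x], auxFn_le_one hδ₁pos C x⟩
  have hg_bd : ∀ x, |g x| ≤ 1 := fun x =>
    abs_le.mpr ⟨by simp only [hg_def]; linarith [auxFn_le_one hδ₂pos Cᶜ x],
      by simp only [hg_def]; linarith [auxFn_nonneg δ₂ Cᶜ x]⟩
  have hind_meas : Measurable (C.indicator (fun _ => (1 : ℝ))) :=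
    measurable_const.indicator hC
  have hind_bd : ∀ x, |C.indicator (fun _ => (1 : ℝ)) x| ≤ 1 := fun x => by
    by_cases h : x ∈ C <;> simp [h]
  have hg_le_ind : ∀ x, g x ≤ C.indicator (fun _ => (1 : ℝ)) x := by
    intro x
    by_cases h : x ∈ C
    · rw [Set.indicator_of_mem h]
      simp only [hg_def]
      linarith [auxFn_nonneg δ₂ Cᶜ x]
    · have h1 : (1 : ℝ) ≤ auxFn δ₂ Cᶜ x := by
        have := indicator_le_auxFn hδ₂pos Cᶜ x
        rwa [Set.indicator_of_mem (Set.mem_compl h)] at this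
      rw [Set.indicator_of_notMem h]
      simp only [hg_def]
      linarith
  -- integrability
  have hInt : ∀ (h : ℝ → ℝ), Measurable h → (∀ x, |h x| ≤ 1) → ∀ n,
      Integrable (fun ω => h (Z n ω)) P := by
    intro h hm hb n
    refine (integrable_const (1 : ℝ)).mono'
      ((hm.comp (hZ n)).aestronglyMeasurable) (ae_of_all _ fun ω => ?_)
    simpa [Real.norm_eq_abs] using hb (Z n ω)
  have hIntν : ∀ (h : ℝ → ℝ), Measurable h → (∀ x, |h x| ≤ 1) → Integrable h ν := by
    intro h hm hb
    refine (integrable_const (1 : ℝ)).mono' hm.aestronglyMeasurable (ae_of_all _ fun x => ?_)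
    simpa [Real.norm_eq_abs] using hb x
  -- integral bounds
  have hIf : ∫ x, f x ∂ν < (ν C).toReal + ε / 2 := by
    have h1 : ∫ x, f x ∂ν ≤ ∫ x, (Metric.thickening δ₁ C).indicator (fun _ => (1 : ℝ)) x ∂ν := by
      refine integral_mono (hIntν f hf_meas hf_bd)
        ((integrable_const (1 : ℝ)).indicator Metric.isOpen_thickening.measurableSet)
        (fun x => ?_)
      exact auxFn_le_indicator hδ₁pos hCne x
    rw [show (fun _ : ℝ => (1 : ℝ)) = (1 : ℝ → ℝ) from rfl,
      integral_indicator_one Metric.isOpen_thickening.measurableSet] at h1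
    exact lt_of_le_of_lt h1 hδ₁
  have hIaux2 : ∫ x, auxFn δ₂ Cᶜ x ∂ν < 1 - (ν C).toReal + ε / 2 := by
    have haux_meas : Measurable (auxFn δ₂ Cᶜ) := (auxFn_lipschitz hδ₂pos Cᶜ).continuous.measurable
    have haux_bd : ∀ x, |auxFn δ₂ Cᶜ x| ≤ 1 := fun x =>
      abs_le.mpr ⟨by linarith [auxFn_nonneg δ₂ Cᶜ x], auxFn_le_one hδ₂pos Cᶜ x⟩
    have h1 : ∫ x, auxFn δ₂ Cᶜ x ∂ν
        ≤ ∫ x, (Metric.thickening δ₂ Cᶜ).indicator (fun _ => (1 : ℝ)) x ∂ν := by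
      refine integral_mono (hIntν _ haux_meas haux_bd)
        ((integrable_const (1 : ℝ)).indicator Metric.isOpen_thickening.measurableSet)
        (fun x => ?_)
      exact auxFn_le_indicator hδ₂pos hCcne' x
    rw [show (fun _ : ℝ => (1 : ℝ)) = (1 : ℝ → ℝ) from rfl,
      integral_indicator_one Metric.isOpen_thickening.measurableSet] at h1
    exact lt_of_le_of_lt h1 hδ₂
  have hIg : (ν C).toReal - ε / 2 < ∫ x, g x ∂ν := by
    have haux_meas : Measurable (auxFn δ₂ Cᶜ) := (auxFn_lipschitz hδ₂pos Cᶜ).continuous.measurable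
    have haux_bd : ∀ x, |auxFn δ₂ Cᶜ x| ≤ 1 := fun x =>
      abs_le.mpr ⟨by linarith [auxFn_nonneg δ₂ Cᶜ x], auxFn_le_one hδ₂pos Cᶜ x⟩
    have h1 : ∫ x, g x ∂ν = 1 - ∫ x, auxFn δ₂ Cᶜ x ∂ν := by
      rw [hg_def, integral_sub (integrable_const (1 : ℝ)) (hIntν _ haux_meas haux_bd)]
      simp
    rw [h1]
    linarith
  -- apply the hypothesis to f and g
  have hA := hconv f ⟨_, hf_lip⟩ ⟨1, hf_bd⟩ (ε / 2) (half_pos hε)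
  have hB := hconv g ⟨_, hg_lip⟩ ⟨1, hg_bd⟩ (ε / 2) (half_pos hε)
  -- the key inequality
  have key : ∀ n, P {ω | ε < |condProb P (G n) {ω' | Z n ω' ∈ C} ω
        - (fun _ : Ω => (ν C).toReal) ω|}
      ≤ P {ω | ε / 2 < |(P[(fun ω' => f (Z n ω')) | G n]) ω - ∫ x, f x ∂ν|}
        + P {ω | ε / 2 < |(P[(fun ω' => g (Z n ω')) | G n]) ω - ∫ x, g x ∂ν|} := by
    intro n
    have hrw : condProb P (G n) {ω' | Z n ω' ∈ C}
        = P[(fun ω => C.indicator (fun _ => (1 : ℝ)) (Z n ω)) | G n] := by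
      have hfun : ({ω' | Z n ω' ∈ C}).indicator (fun _ => (1 : ℝ))
          = fun ω => C.indicator (fun _ => (1 : ℝ)) (Z n ω) := by
        funext ω
        by_cases h : Z n ω ∈ C
        · rw [Set.indicator_of_mem h, Set.indicator_of_mem (show ω ∈ {ω' | Z n ω' ∈ C} from h)]
        · rw [Set.indicator_of_notMem h,
            Set.indicator_of_notMem (show ω ∉ {ω' | Z n ω' ∈ C} from h)]
      rw [condProb, hfun]
    have hm1 : P[(fun ω => C.indicator (fun _ => (1 : ℝ)) (Z n ω)) | G n]
        ≤ᵐ[P] P[(fun ω => f (Z n ω)) | G n] :=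
      condExp_mono (hInt _ hind_meas hind_bd n) (hInt f hf_meas hf_bd n)
        (ae_of_all _ fun ω => indicator_le_auxFn hδ₁pos C (Z n ω))
    have hm2 : P[(fun ω => g (Z n ω)) | G n]
        ≤ᵐ[P] P[(fun ω => C.indicator (fun _ => (1 : ℝ)) (Z n ω)) | G n] :=
      condExp_mono (hInt g hg_meas hg_bd n) (hInt _ hind_meas hind_bd n)
        (ae_of_all _ fun ω => hg_le_ind (Z n ω))
    refine le_trans (measure_mono_ae ?_) (measure_union_le _ _)
    filter_upwards [hm1, hm2] with ω h1 h2 hmem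
    have hmem' : ε < |(P[(fun ω'' => C.indicator (fun _ => (1 : ℝ)) (Z n ω'')) | G n]) ω
        - (ν C).toReal| := by
      have h3 : ε < |condProb P (G n) {ω' | Z n ω' ∈ C} ω - (ν C).toReal| := hmem
      rwa [hrw] at h3
    rcases abs_cases ((P[(fun ω'' => C.indicator (fun _ => (1 : ℝ)) (Z n ω'')) | G n]) ω
        - (ν C).toReal) with ⟨he, _⟩ | ⟨he, _⟩ <;> rw [he] at hmem'
    · refine Or.inl ?_
      show ε / 2 < |(P[(fun ω' => f (Z n ω')) | G n]) ω - ∫ x, f x ∂ν|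
      have h4 : ε / 2 < (P[(fun ω' => f (Z n ω')) | G n]) ω - ∫ x, f x ∂ν := by linarith
      exact h4.trans_le (le_abs_self _)
    · refine Or.inr ?_
      show ε / 2 < |(P[(fun ω' => g (Z n ω')) | G n]) ω - ∫ x, g x ∂ν|
      have h4 : ε / 2 < (∫ x, g x ∂ν) - (P[(fun ω' => g (Z n ω')) | G n]) ω := by linarith
      rw [abs_sub_comm]
      exact h4.trans_le (le_abs_self _)
  -- conclude by squeezing
  have hsum : Tendsto (fun n =>
      P {ω | ε / 2 < |(P[(fun ω' => f (Z n ω')) | G n]) ω - ∫ x, f x ∂ν|}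
        + P {ω | ε / 2 < |(P[(fun ω' => g (Z n ω')) | G n]) ω - ∫ x, g x ∂ν|})
      atTop (𝓝 0) := by
    have h := hA.add hB
    simpa using h
  exact tendsto_of_tendsto_of_tendsto_of_le_of_le tendsto_const_nhds hsum
    (fun n => zero_le) key
end
end

section
/- Let (Z_n) be a sequence of real random variables and ν a Borel probability measure on ℝ. If Z_n →d* ν, then (Z_n) is O_{P*}(1), i.e. for every δ > 0, lim_{M→∞} limsup_{n→∞} P( P(|Z_n| ≥ M | 𝒢_n) > δ ) = 0. -/
open MeasureTheory Filter Topology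

noncomputable section

/-- `(A_n)` is `o_{P*}(1)`: for all `ε > 0` and `δ > 0`,
`P( P(|A_n| > ε | 𝒢_n) > δ ) → 0`. -/
def oPstar {Ω : Type*} [MeasurableSpace Ω] (P : Measure Ω)
    (G : ℕ → MeasurableSpace Ω) (A : ℕ → Ω → ℝ) : Prop :=
  ∀ ε : ℝ, 0 < ε → ∀ δ : ℝ, 0 < δ →
    Tendsto (fun n => P {ω | δ < condProb P (G n) {ω' | ε < |A n ω'|} ω})
      atTop (nhds 0)

/-- `(A_n)` is `O_{P*}(1)`: for all `δ > 0`,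
`lim_{M→∞} limsup_n P( P(|A_n| ≥ M | 𝒢_n) > δ ) = 0`. -/
def bigOPstar {Ω : Type*} [MeasurableSpace Ω] (P : Measure Ω)
    (G : ℕ → MeasurableSpace Ω) (A : ℕ → Ω → ℝ) : Prop :=
  ∀ δ : ℝ, 0 < δ →
    Tendsto (fun M : ℝ =>
        Filter.limsup
          (fun n => P {ω | δ < condProb P (G n) {ω' | M ≤ |A n ω'|} ω}) atTop)
      atTop (nhds 0)

/-- `(Y_n)` is `O_P(1)` (bounded in probability):
`lim_{M→∞} limsup_n P(|Y_n| > M) = 0`. -/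
def bigOP {Ω : Type*} [MeasurableSpace Ω] (P : Measure Ω) (Y : ℕ → Ω → ℝ) : Prop :=
  Tendsto (fun M : ℝ => Filter.limsup (fun n => P {ω | M < |Y n ω|}) atTop)
    atTop (nhds 0)

/-- If `Z_n →d* ν`, then `(Z_n)` is `O_{P*}(1)`. -/
theorem stmt12 {Ω : Type*} [m0 : MeasurableSpace Ω] (P : Measure Ω)
    [IsProbabilityMeasure P] (G : ℕ → MeasurableSpace Ω) (hG : ∀ n, G n ≤ m0)
    (Z : ℕ → Ω → ℝ) (hZ : ∀ n, Measurable (Z n))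
    (ν : Measure ℝ) [IsProbabilityMeasure ν]
    (hconv : CondConvInDist P G Z ν) :
    bigOPstar P G Z := by
  intro δ hδ
  -- Choose K with ν {x | K ≤ |x|} small
  have hmeasK : ∀ k : ℕ, MeasurableSet {x : ℝ | (k : ℝ) ≤ |x|} := fun k =>
    measurableSet_le measurable_const measurable_id.abs
  have hanti : Antitone (fun k : ℕ => {x : ℝ | (k : ℝ) ≤ |x|}) := by
    intro a b hab x hx
    have hab' : (a : ℝ) ≤ (b : ℝ) := Nat.cast_le.mpr hab
    exact le_trans hab' hx
  have hempty : ⋂ k : ℕ, {x : ℝ | (k : ℝ) ≤ |x|} = ∅ := by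
    ext x
    simp only [Set.mem_iInter, Set.mem_setOf_eq, Set.mem_empty_iff_false, iff_false, not_forall,
      not_le]
    obtain ⟨k, hk⟩ := exists_nat_gt |x|
    exact ⟨k, hk⟩
  have htend : Tendsto (fun k : ℕ => ν {x : ℝ | (k : ℝ) ≤ |x|}) atTop (nhds 0) := by
    have := tendsto_measure_iInter_atTop (μ := ν) (fun k => (hmeasK k).nullMeasurableSet) hanti
      ⟨0, measure_ne_top ν _⟩
    rwa [hempty, measure_empty] at this
  have hofpos : (0 : ENNReal) < ENNReal.ofReal (δ / 2) := ENNReal.ofReal_pos.mpr (half_pos hδ)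
  obtain ⟨K, hK⟩ : ∃ K : ℕ, ν {x : ℝ | (K : ℝ) ≤ |x|} ≤ ENNReal.ofReal (δ / 2) := by
    have := htend.eventually_lt_const hofpos
    obtain ⟨K, hK⟩ := this.exists
    exact ⟨K, hK.le⟩
  -- key: for each large M, the inner sequence tends to 0
  have key : ∀ M : ℝ, (K : ℝ) + 1 ≤ M →
      Tendsto (fun n => P {ω | δ < condProb P (G n) {ω' | M ≤ |Z n ω'|} ω}) atTop (nhds 0) := by
    intro M hM
    set h : ℝ → ℝ := fun x => min 1 (max 0 (|x| - (M - 1))) with hh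
    have habs : LipschitzWith 1 (fun x : ℝ => |x| - (M - 1)) :=
      LipschitzWith.of_dist_le_mul fun x y => by
        simp only [Real.dist_eq, NNReal.coe_one, one_mul]
        have hx : (|x| - (M - 1)) - (|y| - (M - 1)) = |x| - |y| := by ring
        rw [hx]
        exact abs_abs_sub_abs_le_abs_sub x y
    have hLip : LipschitzWith 1 h := ((habs.const_max 0).const_min 1)
    have hnn : ∀ x, 0 ≤ h x := fun x => le_min zero_le_one (le_max_left _ _)
    have hle1 : ∀ x, h x ≤ 1 := fun x => min_le_left _ _
    have hbd : ∀ x, |h x| ≤ 1 := fun x => abs_le.mpr ⟨by linarith [hnn x], hle1 x⟩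
    have hone : ∀ x : ℝ, M ≤ |x| → h x = 1 := by
      intro x hx
      have : (1 : ℝ) ≤ |x| - (M - 1) := by linarith
      simp [hh, max_eq_right (le_trans zero_le_one this), min_eq_left this]
    have hzero : ∀ x : ℝ, |x| < (K : ℝ) → h x = 0 := by
      intro x hx
      have : |x| - (M - 1) ≤ 0 := by linarith
      simp [hh, max_eq_left this]
    -- integral bound
    have hintν : Integrable h ν := by
      refine (integrable_const (1 : ℝ)).mono' ?_ ?_
      · exact (hLip.continuous.measurable).aestronglyMeasurable
      · exact Filter.Eventually.of_forall fun x => by simpa [Real.norm_eq_abs] using hbd x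
    have hintind : Integrable ({x : ℝ | (K : ℝ) ≤ |x|}.indicator (fun _ => (1 : ℝ))) ν :=
      (integrable_const (1 : ℝ)).indicator (hmeasK K)
    have hc : ∫ x, h x ∂ν ≤ δ / 2 := by
      have hpt : ∀ x, h x ≤ {x : ℝ | (K : ℝ) ≤ |x|}.indicator (fun _ => (1 : ℝ)) x := by
        intro x
        by_cases hx : (K : ℝ) ≤ |x|
        · simpa [Set.indicator_of_mem, hx] using hle1 x
        · push_neg at hx
          simp [Set.indicator_of_notMem, hx, hzero x hx]
      calc ∫ x, h x ∂ν ≤ ∫ x, {x : ℝ | (K : ℝ) ≤ |x|}.indicator (fun _ => (1 : ℝ)) x ∂ν :=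
            integral_mono hintν hintind hpt
        _ = (ν {x : ℝ | (K : ℝ) ≤ |x|}).toReal := by
            rw [integral_indicator_const _ (hmeasK K)]; simp; rfl
        _ ≤ δ / 2 := ENNReal.toReal_le_of_le_ofReal (half_pos hδ).le hK
    have hmain := hconv h ⟨1, hLip⟩ ⟨1, hbd⟩ (δ / 2) (half_pos hδ)
    refine tendsto_of_tendsto_of_tendsto_of_le_of_le tendsto_const_nhds hmain
      (fun n => zero_le) ?_
    intro n
    set S : Set Ω := {ω' | M ≤ |Z n ω'|} with hS
    have hSmeas : MeasurableSet S := measurableSet_le measurable_const (hZ n).abs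
    have hint1 : Integrable (S.indicator (fun _ => (1 : ℝ))) P :=
      (integrable_const (1 : ℝ)).indicator hSmeas
    have hint2 : Integrable (fun ω => h (Z n ω)) P := by
      refine (integrable_const (1 : ℝ)).mono' ?_ ?_
      · exact (hLip.continuous.measurable.comp (hZ n)).aestronglyMeasurable
      · exact Filter.Eventually.of_forall fun ω => by
          simpa [Real.norm_eq_abs] using hbd (Z n ω)
    have hptle : ∀ ω, S.indicator (fun _ => (1 : ℝ)) ω ≤ h (Z n ω) := by
      intro ω
      by_cases hω : ω ∈ S
      · rw [Set.indicator_of_mem hω, hone (Z n ω) hω]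
      · rw [Set.indicator_of_notMem hω]; exact hnn _
    have hcond : condProb P (G n) S ≤ᵐ[P] P[(fun ω => h (Z n ω)) | G n] :=
      condExp_mono hint1 hint2 (Filter.Eventually.of_forall hptle)
    calc P {ω | δ < condProb P (G n) S ω}
        ≤ P {ω | δ < (P[(fun ω => h (Z n ω)) | G n]) ω} := by
          refine measure_mono_ae ?_
          filter_upwards [hcond] with ω hω hmem
          exact lt_of_lt_of_le hmem hω
      _ ≤ P {ω | δ / 2 < |(P[(fun ω => h (Z n ω)) | G n]) ω - (fun _ : Ω => ∫ x, h x ∂ν) ω|} := by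
          refine measure_mono ?_
          intro ω hω
          simp only [Set.mem_setOf_eq] at hω ⊢
          have : δ / 2 < (P[(fun ω => h (Z n ω)) | G n]) ω - ∫ x, h x ∂ν := by linarith
          exact lt_of_lt_of_le this (le_abs_self _)
  -- conclude
  have hev : ∀ᶠ M : ℝ in atTop,
      Filter.limsup (fun n => P {ω | δ < condProb P (G n) {ω' | M ≤ |Z n ω'|} ω}) atTop = 0 := by
    filter_upwards [eventually_ge_atTop ((K : ℝ) + 1)] with M hM
    exact (key M hM).limsup_eq
  exact Tendsto.congr' (by filter_upwards [hev] with M hM; exact hM.symm) tendsto_const_nhds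
end
end

section
/- Let (Z_n) be a sequence of real random variables with Z_n →d* ν for a Borel probability measure ν on ℝ, and let (a_n) be o_{P*}(1). Then Z_n + a_n →d* ν, i.e. for every bounded Lipschitz function h : ℝ → ℝ, the conditional expectations E[h(Z_n + a_n) | 𝒢_n] converge in probability to ∫ h dν. -/
open MeasureTheory Filter Topology

noncomputable section

/-- If `Z_n →d* ν` and `(a_n)` is `o_{P*}(1)`, then `Z_n + a_n →d* ν`. -/
theorem stmt13 {Ω : Type*} [m0 : MeasurableSpace Ω] (P : Measure Ω)
    [IsProbabilityMeasure P] (G : ℕ → MeasurableSpace Ω) (hG : ∀ n, G n ≤ m0)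
    (Z a : ℕ → Ω → ℝ) (hZ : ∀ n, Measurable (Z n)) (ha' : ∀ n, Measurable (a n))
    (ν : Measure ℝ) [IsProbabilityMeasure ν]
    (hconv : CondConvInDist P G Z ν) (ha : oPstar P G a) :
    CondConvInDist P G (fun n ω => Z n ω + a n ω) ν := by
  rintro h ⟨K, hK⟩ ⟨C, hC⟩ ε hε
  have hC0 : 0 ≤ C := le_trans (abs_nonneg _) (hC 0)
  set η : ℝ := ε / (4 * ((K : ℝ) + 1)) with hη_def
  have hη : 0 < η := by positivity
  set δ : ℝ := ε / (8 * (C + 1)) with hδ_def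
  have hδ : 0 < δ := by positivity
  have hKη : (K : ℝ) * η ≤ ε / 4 := by
    rw [hη_def, ← mul_div_assoc, div_le_div_iff₀ (by positivity) (by norm_num : (0:ℝ) < 4)]
    nlinarith [K.coe_nonneg]
  have h2Cδ : 2 * C * δ < ε / 4 := by
    rw [hδ_def, ← mul_div_assoc, div_lt_div_iff₀ (by positivity) (by norm_num : (0:ℝ) < 4)]
    nlinarith
  -- abbreviations
  set g : ℕ → Ω → ℝ := fun n => condProb P (G n) {ω' | η < |a n ω'|} with hg_def
  set f1 : ℕ → Ω → ℝ := fun n => P[(fun ω => h (Z n ω + a n ω)) | G n] with hf1_def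
  set f2 : ℕ → Ω → ℝ := fun n => P[(fun ω => h (Z n ω)) | G n] with hf2_def
  set I : ℝ := ∫ x, h x ∂ν with hI_def
  have hmeash : Measurable h := hK.continuous.measurable
  -- integrability of bounded measurable functions
  have int_bdd : ∀ (f : Ω → ℝ) (C' : ℝ), Measurable f → (∀ ω, |f ω| ≤ C') → Integrable f P := by
    intro f C' hf hbd
    exact ⟨hf.aestronglyMeasurable, HasFiniteIntegral.of_bounded (ae_of_all _ hbd)⟩
  -- key a.e. bound
  have key : ∀ n, ∀ᵐ ω ∂P, |f1 n ω - f2 n ω| ≤ (K : ℝ) * η + 2 * C * g n ω := by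
    intro n
    set S : Set Ω := {ω' | η < |a n ω'|} with hS_def
    have hSmeas : MeasurableSet S := measurableSet_lt measurable_const (ha' n).abs
    set D : Ω → ℝ := S.indicator (fun _ => (1 : ℝ)) with hD_def
    set F1 : Ω → ℝ := fun ω => h (Z n ω + a n ω) with hF1_def
    set F2 : Ω → ℝ := fun ω => h (Z n ω) with hF2_def
    set B : Ω → ℝ := fun ω => (K : ℝ) * η + 2 * C * D ω with hB_def
    have hintF1 : Integrable F1 P := int_bdd _ C (hmeash.comp ((hZ n).add (ha' n))) (fun ω => hC _)
    have hintF2 : Integrable F2 P := int_bdd _ C (hmeash.comp (hZ n)) (fun ω => hC _)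
    have hDbd : ∀ ω, |D ω| ≤ 1 := by
      intro ω
      by_cases hω : ω ∈ S
      · simp [hD_def, Set.indicator_of_mem hω]
      · simp [hD_def, Set.indicator_of_notMem hω]
    have hD0 : ∀ ω, 0 ≤ D ω := fun ω => Set.indicator_nonneg (fun _ _ => zero_le_one) ω
    have hintD : Integrable D P :=
      int_bdd _ 1 ((measurable_const.indicator hSmeas)) hDbd
    have hintB : Integrable B P := by
      apply int_bdd _ ((K : ℝ) * η + 2 * C * 1)
      · exact measurable_const.add ((measurable_const.indicator hSmeas).const_mul _)
      · intro ω
        have hBω : B ω = (K : ℝ) * η + 2 * C * D ω := rfl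
        rw [abs_of_nonneg (by rw [hBω]; nlinarith [hD0 ω, K.coe_nonneg, hη.le, hC0])]
        rw [hBω]
        have hD1 : D ω ≤ 1 := (abs_le.mp (hDbd ω)).2
        have := mul_le_mul_of_nonneg_left hD1 (by linarith : (0:ℝ) ≤ 2 * C)
        linarith
    -- pointwise bound
    have hpt : ∀ ω, |F1 ω - F2 ω| ≤ B ω := by
      intro ω
      by_cases hω : ω ∈ S
      · have hD1 : D ω = 1 := Set.indicator_of_mem hω _
        calc |F1 ω - F2 ω| = |F1 ω + -(F2 ω)| := by rw [sub_eq_add_neg]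
          _ ≤ |F1 ω| + |-(F2 ω)| := abs_add_le _ _
          _ = |F1 ω| + |F2 ω| := by rw [abs_neg]
          _ ≤ C + C := add_le_add (hC _) (hC _)
          _ ≤ B ω := by rw [hB_def]; simp only [hD1]; nlinarith [K.coe_nonneg, hη.le]
      · have hD0' : D ω = 0 := Set.indicator_of_notMem hω _
        have haω : |a n ω| ≤ η := le_of_not_gt hω
        have hlip : |F1 ω - F2 ω| ≤ (K : ℝ) * |a n ω| := by
          have := hK.dist_le_mul (Z n ω + a n ω) (Z n ω)
          rw [Real.dist_eq, Real.dist_eq, add_sub_cancel_left] at this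
          exact this
        calc |F1 ω - F2 ω| ≤ (K : ℝ) * |a n ω| := hlip
          _ ≤ (K : ℝ) * η := by nlinarith [K.coe_nonneg]
          _ = B ω := by rw [hB_def]; simp [hD0']
    have hsub : f1 n - f2 n =ᵐ[P] P[F1 - F2 | G n] := (condExp_sub hintF1 hintF2 (G n)).symm
    have hmono1 : P[F1 - F2 | G n] ≤ᵐ[P] P[B | G n] :=
      condExp_mono (hintF1.sub hintF2) hintB (ae_of_all _ fun ω => (abs_le.mp (hpt ω)).2)
    have hmono2 : P[-B | G n] ≤ᵐ[P] P[F1 - F2 | G n] :=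
      condExp_mono (hintB.neg) (hintF1.sub hintF2)
        (ae_of_all _ fun ω => by
          simp only [Pi.neg_apply, Pi.sub_apply]
          exact (abs_le.mp (hpt ω)).1)
    have hnegB : P[-B | G n] =ᵐ[P] -P[B | G n] := condExp_neg B (G n)
    -- condexp of B
    have hBsplit : B = (fun _ => (K : ℝ) * η) + (2 * C) • D := by
      funext ω; simp [hB_def, Pi.add_apply, Pi.smul_apply, smul_eq_mul]
    have hEB : P[B | G n] =ᵐ[P] fun ω => (K : ℝ) * η + 2 * C * g n ω := by
      rw [hBsplit]
      refine (condExp_add (integrable_const _) (hintD.smul (2 * C)) (G n)).trans ?_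
      have h1 : P[(fun _ => (K : ℝ) * η : Ω → ℝ) | G n] = fun _ => (K : ℝ) * η :=
        condExp_const (hG n) _
      have h2 : P[(2 * C) • D | G n] =ᵐ[P] (2 * C) • P[D | G n] := condExp_smul (2 * C) D (G n)
      filter_upwards [h2] with ω h2ω
      simp only [Pi.add_apply, h1, h2ω, Pi.smul_apply, smul_eq_mul]
      rfl
    filter_upwards [hsub, hmono1, hmono2, hnegB, hEB] with ω h1 h2 h3 h4 h5
    simp only [Pi.sub_apply] at h1
    simp only [Pi.neg_apply] at h4
    rw [h4, h5] at h3
    rw [h5] at h2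
    rw [abs_le]
    constructor <;> linarith
  -- convergence hypotheses
  have hf2conv := hconv h ⟨K, hK⟩ ⟨C, hC⟩ (ε / 2) (by positivity)
  have hgconv := ha η hη δ hδ
  -- measure bound
  have hbound : ∀ n, P {ω | ε < |f1 n ω - I|} ≤
      P {ω | ε / 2 < |f2 n ω - I|} + P {ω | δ < g n ω} := by
    intro n
    have hincl : ({ω | ε < |f1 n ω - I|} : Set Ω) ≤ᵐ[P]
        ((({ω | ε / 2 < |f2 n ω - I|} : Set Ω) ∪ {ω | δ < g n ω} : Set Ω)) := by
      filter_upwards [key n] with ω hω hmem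
      by_contra hnot
      have hnot' : ¬ (ε / 2 < |f2 n ω - I| ∨ δ < g n ω) := hnot
      push_neg at hnot'
      obtain ⟨h1, h2⟩ := hnot' 
      have htri : |f1 n ω - I| ≤ |f1 n ω - f2 n ω| + |f2 n ω - I| :=
        abs_sub_le (f1 n ω) (f2 n ω) I
      have hcontra : |f1 n ω - I| < ε := by
        have hCg : 2 * C * g n ω ≤ 2 * C * δ :=
          mul_le_mul_of_nonneg_left h2 (by linarith)
        nlinarith [hω, h1]
      exact absurd hmem (not_lt.mpr hcontra.le)
    calc P {ω | ε < |f1 n ω - I|}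
        ≤ P ({ω | ε / 2 < |f2 n ω - I|} ∪ {ω | δ < g n ω}) := measure_mono_ae hincl
      _ ≤ _ := measure_union_le _ _
  -- squeeze
  have hsum : Tendsto (fun n => P {ω | ε / 2 < |f2 n ω - I|} + P {ω | δ < g n ω})
      atTop (nhds 0) := by
    have := Tendsto.add hf2conv hgconv
    simpa using this
  exact tendsto_of_tendsto_of_tendsto_of_le_of_le tendsto_const_nhds hsum
    (fun n => zero_le) hbound
end
end

section
/- Let (V_n) be real random variables whose cumulative distribution functions F_n(z) := P(V_n ≤ z) are continuous at every point of ℝ. Let Φ_n : Ω × ℝ → ℝ be jointly measurable functions such that for every ω ∈ Ω the map z ↦ Φ_n(ω, z) is nondecreasing with values in [0, 1]. Assume that for every ε > 0, P( sup_{z ∈ ℝ} |Φ_n(·, z) − F_n(z)| > ε ) → 0 as n → ∞ (this event is measurable since, by monotonicity of Φ_n(ω, ·) and continuity of F_n, the supremum may be taken over the rationals). Then for every u ∈ (0, 1), P( Φ_n(·, V_n(·)) ≤ u ) → u as n → ∞; consequently, for any 0 < u_1 < u_2 < 1, P( u_1 < Φ_n(·, V_n(·)) ≤ u_2 ) → u_2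 − u_1. -/
open MeasureTheory Filter Topology Set

noncomputable section

private lemma cdf_unif14 {Ω : Type*} [MeasurableSpace Ω] (P : Measure Ω) [IsProbabilityMeasure P]
    (V : Ω → ℝ) (hV : Measurable V)
    (hF : Continuous fun z : ℝ => (P {ω | V ω ≤ z}).toReal)
    (t : ℝ) (ht0 : 0 < t) (ht1 : t < 1) :
    P {ω | (P {ω' | V ω' ≤ V ω}).toReal ≤ t} = ENNReal.ofReal t := by
  set F : ℝ → ℝ := fun z => (P {ω | V ω ≤ z}).toReal with hFdef
  have hmeas : ∀ z : ℝ, MeasurableSet {ω | V ω ≤ z} := fun z =>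
    hV measurableSet_Iic
  have hmono : Monotone F := fun a b hab =>
    ENNReal.toReal_mono (measure_ne_top _ _)
      (measure_mono fun ω hω => le_trans hω hab)
  have hbot : Tendsto F atBot (𝓝 0) := by
    have h1 : Tendsto (fun z : ℝ => P {ω | V ω ≤ z}) atBot (𝓝 0) := by
      have h2 := tendsto_measure_iInter_atBot (μ := P)
        (s := fun z : ℝ => {ω | V ω ≤ z})
        (fun z => (hmeas z).nullMeasurableSet)
        (fun a b hab ω hω => le_trans hω hab) ⟨0, measure_ne_top _ _⟩
      have h3 : ⋂ z : ℝ, {ω | V ω ≤ z} = (∅ : Set Ω) := by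
        ext ω; simp only [mem_iInter, mem_setOf_eq, mem_empty_iff_false, iff_false]
        push_neg
        exact ⟨V ω - 1, by linarith⟩
      rw [h3, measure_empty] at h2
      exact h2
    have := (ENNReal.tendsto_toReal ENNReal.zero_ne_top).comp h1
    simpa [Function.comp_def] using this
  have htop : Tendsto F atTop (𝓝 1) := by
    have h1 : Tendsto (fun z : ℝ => P {ω | V ω ≤ z}) atTop (𝓝 1) := by
      have h2 := tendsto_measure_Iic_atTop (μ := P.map V)
      have h3 : ∀ z : ℝ, (P.map V) (Iic z) = P {ω | V ω ≤ z} := fun z => by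
        rw [Measure.map_apply hV measurableSet_Iic]; rfl
      have h4 : (P.map V) univ = 1 := by
        rw [Measure.map_apply hV MeasurableSet.univ]
        simp
      simp only [h3, h4] at h2
      exact h2
    have := (ENNReal.tendsto_toReal ENNReal.one_ne_top).comp h1
    simpa [Function.comp_def] using this
  set S : Set ℝ := {z | F z ≤ t} with hSdef
  have hSne : S.Nonempty := by
    obtain ⟨z, hz⟩ := (hbot.eventually (eventually_lt_nhds ht0)).exists
    exact ⟨z, hz.le⟩
  have hSbdd : BddAbove S := by
    obtain ⟨M, hM⟩ := eventually_atTop.1 (htop.eventually (eventually_gt_nhds ht1))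
    refine ⟨M, fun z hz => ?_⟩
    by_contra h
    exact absurd hz (not_le.2 (hM z (le_of_not_ge h)))
  have hSclosed : IsClosed S := isClosed_le hF continuous_const
  set z₀ := sSup S with hz₀
  have hz₀mem : z₀ ∈ S := hSclosed.csSup_mem hSne hSbdd
  have h1 : F z₀ ≤ t := hz₀mem
  have h2 : t ≤ F z₀ := by
    have hlt : ∀ z, z₀ < z → t < F z := by
      intro z hz
      by_contra h
      exact absurd (le_csSup hSbdd (le_of_not_gt h : F z ≤ t)) (not_le.2 hz)
    have htend : Tendsto F (𝓝[>] z₀) (𝓝 (F z₀)) :=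
      (hF.tendsto z₀).mono_left nhdsWithin_le_nhds
    exact ge_of_tendsto htend
      (eventually_nhdsWithin_of_forall fun z hz => (hlt z hz).le)
  have hFz₀ : F z₀ = t := le_antisymm h1 h2
  have hset : {ω | (P {ω' | V ω' ≤ V ω}).toReal ≤ t} = {ω | V ω ≤ z₀} := by
    ext ω
    simp only [mem_setOf_eq]
    constructor
    · intro h
      exact le_csSup hSbdd (h : F (V ω) ≤ t)
    · intro h
      exact le_trans (hmono h) h1
  rw [hset, ← hFz₀]
  exact (ENNReal.ofReal_toReal (measure_ne_top _ _)).symm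

private lemma key_tendsto14 {Ω : Type*} [m0 : MeasurableSpace Ω] (P : Measure Ω)
    [IsProbabilityMeasure P]
    (V : ℕ → Ω → ℝ) (hV : ∀ n, Measurable (V n))
    (hFcont : ∀ n, Continuous (fun z : ℝ => (P {ω | V n ω ≤ z}).toReal))
    (Φ : ℕ → Ω → ℝ → ℝ)
    (hΦmono : ∀ n ω, Monotone (Φ n ω))
    (hΦ01 : ∀ n ω z, 0 ≤ Φ n ω z ∧ Φ n ω z ≤ 1)
    (happrox : ∀ ε : ℝ, 0 < ε →
      Tendsto
        (fun n => P {ω | ε < ⨆ z : ℝ, |Φ n ω z - (P {ω' | V n ω' ≤ z}).toReal|})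
        atTop (nhds 0))
    (u : ℝ) (hu0 : 0 < u) (hu1 : u < 1) :
    Tendsto (fun n => (P {ω | Φ n ω (V n ω) ≤ u}).toReal) atTop (𝓝 u) := by
  rw [Metric.tendsto_atTop]
  intro δ hδ
  set ε := min (δ/4) (min (u/2) ((1-u)/2)) with hεdef
  have hε0 : 0 < ε := lt_min (by linarith) (lt_min (by linarith) (by linarith))
  have hεδ : ε ≤ δ/4 := min_le_left _ _
  have hεu : ε < u := lt_of_le_of_lt
    (le_trans (min_le_right _ _) (min_le_left _ _)) (by linarith)
  have hεu' : u + ε < 1 := by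
    have h := le_trans (min_le_right (δ/4) (min (u/2) ((1-u)/2))) (min_le_right (u/2) ((1-u)/2))
    linarith
  have a_tendsto : Tendsto
      (fun n => (P {ω | ε < ⨆ z : ℝ, |Φ n ω z - (P {ω' | V n ω' ≤ z}).toReal|}).toReal)
      atTop (𝓝 0) := by
    have := (ENNReal.tendsto_toReal ENNReal.zero_ne_top).comp (happrox ε hε0)
    simpa [Function.comp_def] using this
  have hev : ∀ᶠ n in atTop,
      (P {ω | ε < ⨆ z : ℝ, |Φ n ω z - (P {ω' | V n ω' ≤ z}).toReal|}).toReal < δ/2 :=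
    a_tendsto.eventually (eventually_lt_nhds (by linarith))
  rw [eventually_atTop] at hev
  obtain ⟨N, hN⟩ := hev
  refine ⟨N, fun n hn => ?_⟩
  set A := {ω | ε < ⨆ z : ℝ, |Φ n ω z - (P {ω' | V n ω' ≤ z}).toReal|} with hAdef
  have hFle1 : ∀ z : ℝ, (P {ω | V n ω ≤ z}).toReal ≤ 1 := fun z =>
    ENNReal.toReal_mono ENNReal.one_ne_top prob_le_one
  have hgood : ∀ ω, ω ∉ A → ∀ z : ℝ, |Φ n ω z - (P {ω' | V n ω' ≤ z}).toReal| ≤ ε := by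
    intro ω hω z
    have hsup : (⨆ z : ℝ, |Φ n ω z - (P {ω' | V n ω' ≤ z}).toReal|) ≤ ε := not_lt.1 hω
    have hbdd : BddAbove (Set.range fun z : ℝ => |Φ n ω z - (P {ω' | V n ω' ≤ z}).toReal|) := by
      refine ⟨1, ?_⟩
      rintro x ⟨z, rfl⟩
      have h1 := hΦ01 n ω z
      have h2 := hFle1 z
      have h3 : (0:ℝ) ≤ (P {ω' | V n ω' ≤ z}).toReal := ENNReal.toReal_nonneg
      rw [abs_sub_le_iff]
      constructor <;> linarith [h1.1, h1.2]
    exact le_trans (le_ciSup hbdd z) hsup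
  have subset1 : {ω | Φ n ω (V n ω) ≤ u} ⊆
      A ∪ {ω | (P {ω' | V n ω' ≤ V n ω}).toReal ≤ u + ε} := by
    intro ω hω
    by_cases hA : ω ∈ A
    · exact Or.inl hA
    · refine Or.inr ?_
      have h := abs_le.1 (hgood ω hA (V n ω))
      have := hω.out
      simp only [mem_setOf_eq]
      linarith [h.1]
  have subset2 : {ω | (P {ω' | V n ω' ≤ V n ω}).toReal ≤ u - ε} ⊆
      A ∪ {ω | Φ n ω (V n ω) ≤ u} := by
    intro ω hω
    by_cases hA : ω ∈ A
    · exact Or.inl hA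
    · refine Or.inr ?_
      have h := abs_le.1 (hgood ω hA (V n ω))
      have := hω.out
      simp only [mem_setOf_eq]
      linarith [h.2]
  have hcdf1 : P {ω | (P {ω' | V n ω' ≤ V n ω}).toReal ≤ u + ε} = ENNReal.ofReal (u + ε) :=
    cdf_unif14 P (V n) (hV n) (hFcont n) (u + ε) (by linarith) hεu'
  have hcdf2 : P {ω | (P {ω' | V n ω' ≤ V n ω}).toReal ≤ u - ε} = ENNReal.ofReal (u - ε) :=
    cdf_unif14 P (V n) (hV n) (hFcont n) (u - ε) (by linarith) (by linarith)
  have hup : P {ω | Φ n ω (V n ω) ≤ u} ≤ P A + ENNReal.ofReal (u + ε) := by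
    refine le_trans (measure_mono subset1) (le_trans (measure_union_le _ _) ?_)
    rw [hcdf1]
  have hlow : ENNReal.ofReal (u - ε) ≤ P A + P {ω | Φ n ω (V n ω) ≤ u} := by
    rw [← hcdf2]
    exact le_trans (measure_mono subset2) (measure_union_le _ _)
  have hup' : (P {ω | Φ n ω (V n ω) ≤ u}).toReal ≤ (P A).toReal + (u + ε) := by
    have hfin : P A + ENNReal.ofReal (u + ε) ≠ ⊤ :=
      ENNReal.add_ne_top.2 ⟨measure_ne_top _ _, ENNReal.ofReal_ne_top⟩
    have := ENNReal.toReal_mono hfin hup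
    rwa [ENNReal.toReal_add (measure_ne_top _ _) ENNReal.ofReal_ne_top,
      ENNReal.toReal_ofReal (by linarith)] at this
  have hlow' : u - ε ≤ (P A).toReal + (P {ω | Φ n ω (V n ω) ≤ u}).toReal := by
    have hfin : P A + P {ω | Φ n ω (V n ω) ≤ u} ≠ ⊤ :=
      ENNReal.add_ne_top.2 ⟨measure_ne_top _ _, measure_ne_top _ _⟩
    have := ENNReal.toReal_mono hfin hlow
    rwa [ENNReal.toReal_add (measure_ne_top _ _) (measure_ne_top _ _),
      ENNReal.toReal_ofReal (by linarith)] at this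
  have ha := hN n hn
  rw [Real.dist_eq, abs_sub_lt_iff]
  constructor <;> linarith [ENNReal.toReal_nonneg (a := P A)]

/-- Abstract coverage theorem: if the random CDFs `Φ_n(ω, ·)` uniformly approximate, in
probability, the everywhere-continuous exact CDFs `F_n` of `V_n`, then
`P(Φ_n(·, V_n) ≤ u) → u` for every `u ∈ (0,1)`, and consequently
`P(u₁ < Φ_n(·, V_n) ≤ u₂) → u₂ − u₁` for `0 < u₁ < u₂ < 1`. -/
theorem stmt14 {Ω : Type*} [m0 : MeasurableSpace Ω] (P : Measure Ω)
    [IsProbabilityMeasure P]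
    (V : ℕ → Ω → ℝ) (hV : ∀ n, Measurable (V n))
    (hFcont : ∀ n, Continuous (fun z : ℝ => (P {ω | V n ω ≤ z}).toReal))
    (Φ : ℕ → Ω → ℝ → ℝ)
    (hΦmeas : ∀ n, Measurable (Function.uncurry (Φ n)))
    (hΦmono : ∀ n ω, Monotone (Φ n ω))
    (hΦ01 : ∀ n ω z, 0 ≤ Φ n ω z ∧ Φ n ω z ≤ 1)
    (happrox : ∀ ε : ℝ, 0 < ε →
      Tendsto
        (fun n => P {ω | ε < ⨆ z : ℝ, |Φ n ω z - (P {ω' | V n ω' ≤ z}).toReal|})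
        atTop (nhds 0)) :
    (∀ u : ℝ, 0 < u → u < 1 →
      Tendsto (fun n => P {ω | Φ n ω (V n ω) ≤ u}) atTop
        (nhds (ENNReal.ofReal u))) ∧
    (∀ u₁ u₂ : ℝ, 0 < u₁ → u₁ < u₂ → u₂ < 1 →
      Tendsto (fun n => P {ω | u₁ < Φ n ω (V n ω) ∧ Φ n ω (V n ω) ≤ u₂}) atTop
        (nhds (ENNReal.ofReal (u₂ - u₁)))) := by
  have key := key_tendsto14 P V hV hFcont Φ hΦmono hΦ01 happrox
  have hgmeas : ∀ n, Measurable fun ω => Φ n ω (V n ω) := fun n =>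
    (hΦmeas n).comp (measurable_id.prodMk (hV n))
  constructor
  · intro u hu0 hu1
    have h := (ENNReal.continuous_ofReal.tendsto u).comp (key u hu0 hu1)
    have h2 : (fun n => ENNReal.ofReal ((P {ω | Φ n ω (V n ω) ≤ u}).toReal)) =
        fun n => P {ω | Φ n ω (V n ω) ≤ u} :=
      funext fun n => ENNReal.ofReal_toReal (measure_ne_top _ _)
    rwa [← h2]
  · intro u₁ u₂ h1 h12 h21
    have k1 := key u₁ h1 (lt_trans h12 h21)
    have k2 := key u₂ (lt_trans h1 h12) h21
    have split : ∀ n, P {ω | Φ n ω (V n ω) ≤ u₂} =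
        P {ω | Φ n ω (V n ω) ≤ u₁} +
        P {ω | u₁ < Φ n ω (V n ω) ∧ Φ n ω (V n ω) ≤ u₂} := by
      intro n
      have hun : {ω | Φ n ω (V n ω) ≤ u₂} =
          {ω | Φ n ω (V n ω) ≤ u₁} ∪
          {ω | u₁ < Φ n ω (V n ω) ∧ Φ n ω (V n ω) ≤ u₂} := by
        ext ω
        simp only [mem_setOf_eq, mem_union]
        constructor
        · intro h
          rcases le_or_gt (Φ n ω (V n ω)) u₁ with h' | h'
          · exact Or.inl h'
          · exact Or.inr ⟨h', h⟩
        · rintro (h | ⟨_, h⟩)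
          · exact le_trans h h12.le
          · exact h
      have hdisj : Disjoint {ω | Φ n ω (V n ω) ≤ u₁}
          {ω | u₁ < Φ n ω (V n ω) ∧ Φ n ω (V n ω) ≤ u₂} := by
        rw [Set.disjoint_left]
        intro ω hω1 hω2
        exact absurd hω2.1 (not_lt.2 hω1)
      have hmeas2 : MeasurableSet {ω | u₁ < Φ n ω (V n ω) ∧ Φ n ω (V n ω) ≤ u₂} := by
        have : {ω | u₁ < Φ n ω (V n ω) ∧ Φ n ω (V n ω) ≤ u₂} =
            (fun ω => Φ n ω (V n ω)) ⁻¹' (Ioc u₁ u₂) := rfl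
        rw [this]
        exact (hgmeas n) measurableSet_Ioc
      rw [hun, measure_union hdisj hmeas2]
    have treal : ∀ n, (P {ω | u₁ < Φ n ω (V n ω) ∧ Φ n ω (V n ω) ≤ u₂}).toReal =
        (P {ω | Φ n ω (V n ω) ≤ u₂}).toReal - (P {ω | Φ n ω (V n ω) ≤ u₁}).toReal := by
      intro n
      rw [split n, ENNReal.toReal_add (measure_ne_top _ _) (measure_ne_top _ _)]
      ring
    have hr : Tendsto (fun n => (P {ω | u₁ < Φ n ω (V n ω) ∧ Φ n ω (V n ω) ≤ u₂}).toReal)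
        atTop (𝓝 (u₂ - u₁)) := by
      simp only [treal]
      exact k2.sub k1
    have h := (ENNReal.continuous_ofReal.tendsto (u₂ - u₁)).comp hr
    have h2 : (fun n => ENNReal.ofReal
        ((P {ω | u₁ < Φ n ω (V n ω) ∧ Φ n ω (V n ω) ≤ u₂}).toReal)) =
        fun n => P {ω | u₁ < Φ n ω (V n ω) ∧ Φ n ω (V n ω) ≤ u₂} :=
      funext fun n => ENNReal.ofReal_toReal (measure_ne_top _ _)
    rwa [← h2]
end
end

section
/- Let (Ω, 𝔽, μ) be a probability space, T : Ω → Ω a measurable measure-preserving ergodic transformation, and f : Ω → ℝ a measurable function with ∫ f² dμ < ∞. Then for μ-almost every ω, lim_{M→∞} sup_{n ≥ 1} (1/n) ∑_{s=0}^{n−1} f(T^s ω)² · 1{ f(T^s ω)² > M } = 0; equivalently, for almost every ω and every ε > 0 there exists M > 0 such that (1/n) ∑_{s=0}^{n−1} f(T^s ω)² · 1{ f(T^s ω)² > M } < ε for all n ≥ 1. -/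
open MeasureTheory Filter Topology
open ENNReal

noncomputable section

set_option linter.unusedSectionVars false
set_option linter.unusedVariables false

namespace Stmt15Aux

variable {Ω : Type*} [MeasurableSpace Ω]

/-- Birkhoff sums of `g` along `T`. -/
def bS (T : Ω → Ω) (g : Ω → ℝ) (n : ℕ) (ω : Ω) : ℝ :=
  ∑ s ∈ Finset.range n, g (T^[s] ω)

lemma bS_succ (T : Ω → Ω) (g : Ω → ℝ) (n : ℕ) (ω : Ω) :
    bS T g (n + 1) ω = g ω + bS T g n (T ω) := by
  unfold bS
  rw [Finset.sum_range_succ']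
  simp [Function.iterate_succ_apply, add_comm]

lemma bS_meas {T : Ω → Ω} {g : Ω → ℝ} (hT : Measurable T) (hg : Measurable g) (n : ℕ) :
    Measurable (bS T g n) :=
  Finset.measurable_sum _ fun s _ => hg.comp (hT.iterate s)

lemma bS_int {μ : Measure Ω} {T : Ω → Ω} {g : Ω → ℝ}
    (hT : MeasurePreserving T μ μ) (hgi : Integrable g μ) (n : ℕ) :
    Integrable (bS T g n) μ := by
  apply integrable_finset_sum
  intro s _
  exact ((hT.iterate s).integrable_comp hgi.aestronglyMeasurable).mpr hgi

lemma bS_nonneg {T : Ω → Ω} {g : Ω → ℝ} (hg0 : ∀ ω, 0 ≤ g ω) (n : ℕ) (ω : Ω) :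
    0 ≤ bS T g n ω :=
  Finset.sum_nonneg fun s _ => hg0 _

/-- Running maxima `max (0, S₁, …, S_N)` of the Birkhoff sums. -/
def bM (T : Ω → Ω) (g : Ω → ℝ) : ℕ → Ω → ℝ
  | 0 => fun _ => 0
  | N + 1 => fun ω => max (bM T g N ω) (bS T g (N + 1) ω)

lemma bM_nonneg (T : Ω → Ω) (g : Ω → ℝ) (N : ℕ) (ω : Ω) : 0 ≤ bM T g N ω := by
  induction N with
  | zero => exact le_refl _
  | succ N ih => exact le_trans ih (le_max_left _ _)

lemma bM_mono (T : Ω → Ω) (g : Ω → ℝ) (N : ℕ) (ω : Ω) :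
    bM T g N ω ≤ bM T g (N + 1) ω := le_max_left _ _

lemma bS_le_bM (T : Ω → Ω) (g : Ω → ℝ) {n N : ℕ} (h : n ≤ N) (ω : Ω) :
    bS T g n ω ≤ bM T g N ω := by
  induction N with
  | zero =>
    interval_cases n
    simp [bS, bM]
  | succ N ih =>
    rcases Nat.lt_succ_iff_lt_or_eq.mp (Nat.lt_succ_of_le h) with h' | h'
    · exact le_trans (ih (Nat.lt_succ_iff.mp h')) (le_max_left _ _)
    · rw [h']; exact le_max_right _ _

lemma bM_meas {T : Ω → Ω} {g : Ω → ℝ} (hT : Measurable T) (hg : Measurable g) (N : ℕ) :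
    Measurable (bM T g N) := by
  induction N with
  | zero => exact measurable_const
  | succ N ih => exact ih.max (bS_meas hT hg (N + 1))

lemma bM_int {μ : Measure Ω} {T : Ω → Ω} {g : Ω → ℝ}
    (hT : MeasurePreserving T μ μ) (hgi : Integrable g μ) (N : ℕ) :
    Integrable (bM T g N) μ := by
  induction N with
  | zero => exact integrable_zero _ _ _
  | succ N ih =>
    have := ih.sup (bS_int hT hgi (N + 1))
    convert this using 1
    ext ω
    simp [bM]

lemma bM_key (T : Ω → Ω) (g : Ω → ℝ) (N : ℕ) (ω : Ω) :
    bM T g N ω ≤ max 0 (g ω + bM T g N (T ω)) := by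
  induction N with
  | zero => exact le_max_left _ _
  | succ N ih =>
    refine max_le ?_ ?_
    · exact le_trans ih (max_le_max le_rfl (add_le_add le_rfl (bM_mono T g N (T ω))))
    · rw [bS_succ]
      refine le_trans ?_ (le_max_right _ _)
      exact add_le_add le_rfl (bS_le_bM T g (Nat.le_succ N) (T ω))

lemma bM_pos_exists (T : Ω → Ω) (g : Ω → ℝ) (N : ℕ) (ω : Ω) (h : 0 < bM T g N ω) :
    ∃ n, 0 < bS T g n ω := by
  induction N with
  | zero => exact absurd h (lt_irrefl 0)
  | succ N ih =>
    rcases lt_max_iff.mp h with h' | h'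
    · exact ih h'
    · exact ⟨N + 1, h'⟩

end Stmt15Aux

namespace Stmt15Aux
variable {Ω : Type*} [MeasurableSpace Ω]

/-- The maximal ergodic theorem (Garsia's proof). -/
lemma maximal {μ : Measure Ω} [IsFiniteMeasure μ] {T : Ω → Ω} {g : Ω → ℝ}
    (hT : MeasurePreserving T μ μ) (hg : Measurable g) (hgi : Integrable g μ) :
    0 ≤ ∫ ω in {ω | ∃ n, 0 < bS T g n ω}, g ω ∂μ := by
  set E : ℕ → Set Ω := fun N => {ω | 0 < bM T g N ω} with hE
  have hEmeas : ∀ N, MeasurableSet (E N) :=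
    fun N => measurableSet_lt measurable_const (bM_meas hT.measurable hg N)
  have hEmono : Monotone E := by
    refine monotone_nat_of_le_succ fun N ω h => lt_of_lt_of_le h (bM_mono T g N ω)
  have hstep : ∀ N, 0 ≤ ∫ ω in E N, g ω ∂μ := by
    intro N
    have hMi := bM_int hT hgi N
    have hMTi : Integrable (fun ω => bM T g N (T ω)) μ :=
      (hT.integrable_comp (bM_int hT hgi N).aestronglyMeasurable).mpr (bM_int hT hgi N)
    have hdiffInt : Integrable (fun ω => bM T g N ω - bM T g N (T ω)) μ := hMi.sub hMTi
    -- total integral of the difference is zero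
    have htot : ∫ ω, (bM T g N ω - bM T g N (T ω)) ∂μ = 0 := by
      rw [integral_sub hMi hMTi]
      have : ∫ ω, bM T g N (T ω) ∂μ = ∫ ω, bM T g N ω ∂μ := by
        have h1 : ∫ ω, bM T g N ω ∂(Measure.map T μ) = ∫ ω, bM T g N (T ω) ∂μ :=
          integral_map hT.measurable.aemeasurable
            (by rw [hT.map_eq]; exact hMi.aestronglyMeasurable)
        rw [← h1, hT.map_eq]
      rw [this, sub_self]
    -- the integral over the complement is nonpositive
    have hcompl : ∫ ω in (E N)ᶜ, (bM T g N ω - bM T g N (T ω)) ∂μ ≤ 0 := by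
      refine setIntegral_nonpos (hEmeas N).compl fun ω hω => ?_
      have h1 : bM T g N ω ≤ 0 := not_lt.mp hω
      have h2 : 0 ≤ bM T g N (T ω) := bM_nonneg T g N (T ω)
      linarith
    have hsplit := integral_add_compl (hEmeas N) hdiffInt
    have hEdiff : 0 ≤ ∫ ω in E N, (bM T g N ω - bM T g N (T ω)) ∂μ := by
      have : ∫ ω in E N, (bM T g N ω - bM T g N (T ω)) ∂μ
          + ∫ ω in (E N)ᶜ, (bM T g N ω - bM T g N (T ω)) ∂μ = 0 := by
        rw [hsplit, htot]
      linarith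
    refine le_trans hEdiff ?_
    refine setIntegral_mono_on (hdiffInt.integrableOn) (hgi.integrableOn) (hEmeas N) ?_
    intro ω hω
    have hkey := bM_key T g N ω
    have hpos : 0 < bM T g N ω := hω
    have : bM T g N ω ≤ g ω + bM T g N (T ω) := by
      rcases le_max_iff.mp hkey with h | h
      · linarith
      · exact h
    linarith
  -- pass to the union
  have hunion : (⋃ N, E N) = {ω | ∃ n, 0 < bS T g n ω} := by
    ext ω
    simp only [Set.mem_iUnion, Set.mem_setOf_eq, hE]
    constructor
    · rintro ⟨N, hN⟩; exact bM_pos_exists T g N ω hN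
    · rintro ⟨n, hn⟩; exact ⟨n, lt_of_lt_of_le hn (bS_le_bM T g le_rfl ω)⟩
  have htendsto := tendsto_setIntegral_of_monotone hEmeas hEmono
    (hgi.integrableOn : IntegrableOn g (⋃ N, E N) μ)
  rw [hunion] at htendsto
  exact ge_of_tendsto htendsto (Eventually.of_forall hstep)

/-- Weak form of the pointwise ergodic theorem: a.e. upper bound on the limsup of Birkhoff
averages of a nonnegative integrable function by its integral. -/
lemma limsup_le_integral {μ : Measure Ω} [IsProbabilityMeasure μ] {T : Ω → Ω} {g : Ω → ℝ}
    (hT : Ergodic T μ) (hg : Measurable g) (hgi : Integrable g μ) (hg0 : ∀ ω, 0 ≤ g ω) :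
    ∀ᵐ ω ∂μ, limsup (fun n : ℕ => ENNReal.ofReal ((n : ℝ)⁻¹ * bS T g n ω)) atTop
      ≤ ENNReal.ofReal (∫ ω, g ω ∂μ) := by
  set L : Ω → ℝ≥0∞ :=
    fun ω => limsup (fun n : ℕ => ENNReal.ofReal ((n : ℝ)⁻¹ * bS T g n ω)) atTop with hL
  have hLmeas : Measurable L :=
    Measurable.limsup fun n =>
      ((bS_meas hT.measurable hg n).const_mul ((n : ℝ)⁻¹)).ennreal_ofReal
  have hLT : ∀ ω, L ω ≤ L (T ω) := by
    intro ω
    have h1 : L ω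
        = limsup (fun n => ENNReal.ofReal (((n + 1 : ℕ) : ℝ)⁻¹ * bS T g (n + 1) ω)) atTop :=
      (limsup_nat_add (fun n : ℕ => ENNReal.ofReal ((n : ℝ)⁻¹ * bS T g n ω)) 1).symm
    have hpt : ∀ n : ℕ, ENNReal.ofReal (((n + 1 : ℕ) : ℝ)⁻¹ * bS T g (n + 1) ω)
        ≤ ENNReal.ofReal (((n + 1 : ℕ) : ℝ)⁻¹ * g ω)
          + ENNReal.ofReal ((n : ℝ)⁻¹ * bS T g n (T ω)) := by
      intro n
      rw [bS_succ, mul_add]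
      refine le_trans ENNReal.ofReal_add_le (add_le_add le_rfl (ENNReal.ofReal_le_ofReal ?_))
      rcases Nat.eq_zero_or_pos n with h0 | h0
      · subst h0; simp [bS]
      · refine mul_le_mul_of_nonneg_right ?_ (bS_nonneg hg0 n (T ω))
        have hnpos : (0 : ℝ) < (n : ℝ) := by exact_mod_cast h0
        refine inv_anti₀ hnpos ?_
        push_cast; linarith
    have h0lim : Tendsto (fun n : ℕ => ENNReal.ofReal (((n + 1 : ℕ) : ℝ)⁻¹ * g ω))
        atTop (𝓝 0) := by
      rw [← ENNReal.ofReal_zero]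
      apply ENNReal.tendsto_ofReal
      have h := tendsto_one_div_add_atTop_nhds_zero_nat.mul_const (g ω)
      rw [zero_mul] at h
      convert h using 2 with n
      push_cast
      rw [one_div]
    have h2 : ∀ b, L (T ω) < b → L ω ≤ b := by
      intro b hb
      obtain ⟨c, hc1, hc2⟩ := exists_between hb
      have hv : ∀ᶠ (n : ℕ) in atTop, ENNReal.ofReal ((n : ℝ)⁻¹ * bS T g n (T ω)) < c :=
        eventually_lt_of_limsup_lt hc1
      have hu : ∀ᶠ n in atTop, ENNReal.ofReal (((n + 1 : ℕ) : ℝ)⁻¹ * g ω) < b - c :=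
        h0lim.eventually_lt_const (tsub_pos_of_lt hc2)
      have hle : ∀ᶠ n in atTop,
          ENNReal.ofReal (((n + 1 : ℕ) : ℝ)⁻¹ * bS T g (n + 1) ω) ≤ b := by
        filter_upwards [hv, hu] with n hn1 hn2
        refine le_trans (hpt n) (le_trans (add_le_add hn2.le hn1.le) ?_)
        rw [add_comm, add_tsub_cancel_of_le hc2.le]
      rw [h1]
      exact limsup_le_of_le (by isBoundedDefault) hle
    exact le_of_forall_gt_imp_ge_of_dense h2
  have claim : ∀ c' : ℝ, (∫ ω, g ω ∂μ) < c' → ∀ᵐ ω ∂μ, L ω ≤ ENNReal.ofReal c' := by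
    intro c' hc'
    have hc'0 : 0 < c' := lt_of_le_of_lt (integral_nonneg hg0) hc'
    set A := {ω | ENNReal.ofReal c' < L ω} with hA
    have hAmeas : MeasurableSet A := measurableSet_lt measurable_const hLmeas
    have hsub : A ⊆ T ⁻¹' A := fun ω hω => lt_of_lt_of_le hω (hLT ω)
    rcases hT.ae_empty_or_univ_of_ae_le_preimage hAmeas.nullMeasurableSet
        (HasSubset.Subset.eventuallyLE hsub) with h | h
    · have hA0 : μ A = 0 := by rwa [ae_eq_empty] at h
      have : ∀ᵐ ω ∂μ, ω ∉ A := measure_eq_zero_iff_ae_notMem.mp hA0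
      filter_upwards [this] with ω hω
      exact not_lt.mp hω
    · exfalso
      set g' : Ω → ℝ := fun ω => g ω - c' with hg'def
      have hg'meas : Measurable g' := hg.sub measurable_const
      have hg'int : Integrable g' μ := hgi.sub (integrable_const c')
      have hbS' : ∀ (n : ℕ) (ω : Ω), bS T g' n ω = bS T g n ω - n * c' := by
        intro n ω
        simp [bS, hg'def, Finset.sum_sub_distrib, mul_comm]
      set E' := {ω | ∃ n, 0 < bS T g' n ω} with hE'
      have hE'meas : MeasurableSet E' := by
        have : E' = ⋃ n, {ω | 0 < bS T g' n ω} := by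
          ext ω; simp [hE']
        rw [this]
        exact MeasurableSet.iUnion fun n =>
          measurableSet_lt measurable_const (bS_meas hT.measurable hg'meas n)
      have hAE : A ⊆ E' := by
        intro ω hω
        rw [hA, Set.mem_setOf_eq] at hω
        have hex : ∃ n : ℕ, ENNReal.ofReal c' < ENNReal.ofReal ((n : ℝ)⁻¹ * bS T g n ω) := by
          by_contra hcon
          push_neg at hcon
          exact absurd (limsup_le_of_le (by isBoundedDefault) (Eventually.of_forall hcon))
            (not_le.mpr hω)
        obtain ⟨n, hn⟩ := hex
        have hlt : c' < (n : ℝ)⁻¹ * bS T g n ω :=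
          (ENNReal.ofReal_lt_ofReal_iff_of_nonneg hc'0.le).mp hn
        have hn1 : 0 < n := by
          rcases Nat.eq_zero_or_pos n with h0 | h0
          · exfalso; subst h0; simp [bS] at hlt; linarith
          · exact h0
        refine ⟨n, ?_⟩
        rw [hbS' n ω]
        have hnpos : (0 : ℝ) < (n : ℝ) := by exact_mod_cast hn1
        have hmul := (mul_lt_mul_iff_right₀ hnpos).mpr hlt
        rw [← mul_assoc, mul_inv_cancel₀ hnpos.ne', one_mul] at hmul
        linarith
      have hμA : μ Aᶜ = 0 := ae_eq_univ.mp h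
      have hμE' : μ E'ᶜ = 0 := measure_mono_null (Set.compl_subset_compl.mpr hAE) hμA
      have hint : ∫ ω in E', g' ω ∂μ = ∫ ω, g' ω ∂μ := by
        rw [← integral_add_compl hE'meas hg'int, setIntegral_measure_zero _ hμE', add_zero]
      have hmax := maximal (μ := μ) hT.toMeasurePreserving hg'meas hg'int
      rw [← hE', hint] at hmax
      have hval : ∫ ω, g' ω ∂μ = (∫ ω, g ω ∂μ) - c' := by
        rw [hg'def]
        rw [integral_sub hgi (integrable_const c'), integral_const]
        simp
      rw [hval] at hmax
      linarith
  have hforall : ∀ᵐ ω ∂μ, ∀ k : ℕ,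
      L ω ≤ ENNReal.ofReal ((∫ ω, g ω ∂μ) + ((k : ℝ) + 1)⁻¹) := by
    rw [ae_all_iff]
    intro k
    refine claim _ (lt_add_of_pos_right _ ?_)
    positivity
  filter_upwards [hforall] with ω hω
  have htend : Tendsto (fun k : ℕ => ENNReal.ofReal ((∫ ω, g ω ∂μ) + ((k : ℝ) + 1)⁻¹))
      atTop (𝓝 (ENNReal.ofReal (∫ ω, g ω ∂μ))) := by
    apply ENNReal.tendsto_ofReal
    have h := tendsto_one_div_add_atTop_nhds_zero_nat (𝕜 := ℝ)
    simp_rw [one_div] at h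
    have := tendsto_const_nhds (x := ∫ ω, g ω ∂μ) (f := atTop (α := ℕ)) |>.add h
    simpa using this
  exact ge_of_tendsto' htend hω

end Stmt15Aux

open Stmt15Aux

/-- Almost-sure uniform (in the sample size) integrability of `z ↦ z²` with respect to the
empirical distributions of a square-integrable strictly stationary ergodic sequence
`e_s = f ∘ T^s`: for a.e. `ω` and every `ε > 0` there is `M > 0` with
`(1/n) ∑_{s<n} e_s(ω)² 1{e_s(ω)² > M} < ε` for all `n ≥ 1`. -/
theorem stmt15 {Ω : Type*} [MeasurableSpace Ω] (μ : Measure Ω) [IsProbabilityMeasure μ]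
    (T : Ω → Ω) (hT : Ergodic T μ)
    (f : Ω → ℝ) (hf : Measurable f)
    (hf2 : Integrable (fun ω => (f ω) ^ 2) μ) :
    ∀ᵐ ω ∂μ, ∀ ε : ℝ, 0 < ε → ∃ M : ℝ, 0 < M ∧ ∀ n : ℕ, 1 ≤ n →
      (1 / (n : ℝ)) * ∑ s ∈ Finset.range n,
        Set.indicator (Set.Ioi M) id ((f (T^[s] ω)) ^ 2) < ε := by
  classical
  -- the truncated functions
  set g : ℕ → Ω → ℝ := fun k ω => Set.indicator (Set.Ioi ((k : ℕ) : ℝ)) id ((f ω) ^ 2) with hgdef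
  have hind_nonneg : ∀ (c : ℝ), 0 ≤ c → ∀ x : ℝ, 0 ≤ Set.indicator (Set.Ioi c) id x := by
    intro c hc x
    by_cases hx : x ∈ Set.Ioi c
    · rw [Set.indicator_of_mem hx]; exact le_of_lt (lt_of_le_of_lt hc hx)
    · rw [Set.indicator_of_notMem hx]
  have hind_le : ∀ (c : ℝ), 0 ≤ c → ∀ x : ℝ, 0 ≤ x → Set.indicator (Set.Ioi c) id x ≤ x := by
    intro c hc x hx
    by_cases hxm : x ∈ Set.Ioi c
    · rw [Set.indicator_of_mem hxm]; exact le_rfl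
    · rw [Set.indicator_of_notMem hxm]; exact hx
  have hgmeas : ∀ k, Measurable (g k) := by
    intro k
    exact (measurable_id.indicator measurableSet_Ioi).comp (hf.pow_const 2)
  have hg0 : ∀ k (ω : Ω), 0 ≤ g k ω := fun k ω =>
    hind_nonneg _ (Nat.cast_nonneg k) _
  have hgle : ∀ k (ω : Ω), g k ω ≤ (f ω) ^ 2 := fun k ω =>
    hind_le _ (Nat.cast_nonneg k) _ (sq_nonneg _)
  have hgint : ∀ k, Integrable (g k) μ := by
    intro k
    refine hf2.mono ((hgmeas k).aestronglyMeasurable) ?_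
    refine Eventually.of_forall fun ω => ?_
    rw [Real.norm_eq_abs, Real.norm_eq_abs, abs_of_nonneg (hg0 k ω),
      abs_of_nonneg (sq_nonneg _)]
    exact hgle k ω
  -- the integrals tend to 0
  have hptw : ∀ᵐ ω ∂μ, Tendsto (fun k => g k ω) atTop (𝓝 ((fun _ : Ω => (0:ℝ)) ω)) := by
    refine Eventually.of_forall fun ω => ?_
    refine tendsto_const_nhds.congr' ?_
    obtain ⟨k₀, hk₀⟩ := exists_nat_ge ((f ω) ^ 2)
    filter_upwards [eventually_ge_atTop k₀] with k hk
    have hmem : (f ω) ^ 2 ∉ Set.Ioi ((k : ℕ) : ℝ) := by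
      simp only [Set.mem_Ioi, not_lt]
      exact le_trans hk₀ (by exact_mod_cast hk)
    rw [hgdef]
    simp only []
    rw [Set.indicator_of_notMem hmem]
  have hinttend : Tendsto (fun k => ∫ ω, g k ω ∂μ) atTop (𝓝 0) := by
    have h := tendsto_integral_of_dominated_convergence (F := g) (f := fun _ : Ω => (0:ℝ))
      (fun ω => (f ω) ^ 2)
      (fun k => (hgmeas k).aestronglyMeasurable) hf2
      (fun k => Eventually.of_forall fun ω => by
        rw [Real.norm_eq_abs, abs_of_nonneg (hg0 k ω)]; exact hgle k ω)
      hptw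
    simpa using h
  -- a.e. limsup bounds for every k
  have hae : ∀ᵐ ω ∂μ, ∀ k : ℕ,
      limsup (fun n : ℕ => ENNReal.ofReal ((n : ℝ)⁻¹ * bS T (g k) n ω)) atTop
        ≤ ENNReal.ofReal (∫ ω, g k ω ∂μ) := by
    rw [ae_all_iff]
    intro k
    exact limsup_le_integral hT (hgmeas k) (hgint k) (hg0 k)
  filter_upwards [hae] with ω hω
  intro ε hε
  -- choose k with small integral
  have : ∀ᶠ k : ℕ in atTop, ∫ ω, g k ω ∂μ < ε / 2 := by
    refine hinttend.eventually_lt_const ?_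
    positivity
  obtain ⟨k, hk⟩ := this.exists
  -- the limsup is < ofReal ε
  have hlim : limsup (fun n : ℕ => ENNReal.ofReal ((n : ℝ)⁻¹ * bS T (g k) n ω)) atTop
      < ENNReal.ofReal ε := by
    refine lt_of_le_of_lt (hω k) ?_
    refine lt_of_le_of_lt (ENNReal.ofReal_le_ofReal hk.le) ?_
    rw [ENNReal.ofReal_lt_ofReal_iff hε]
    linarith
  have hev : ∀ᶠ n : ℕ in atTop, (n : ℝ)⁻¹ * bS T (g k) n ω < ε := by
    filter_upwards [eventually_lt_of_limsup_lt hlim] with n hn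
    have h0 : 0 ≤ (n : ℝ)⁻¹ * bS T (g k) n ω := by
      have := bS_nonneg (T := T) (hg0 k) n ω
      positivity
    exact (ENNReal.ofReal_lt_ofReal_iff_of_nonneg h0).mp hn
  obtain ⟨N, hN⟩ := eventually_atTop.mp hev
  -- choose the truncation level M
  set M : ℝ := (k : ℝ) + (∑ s ∈ Finset.range N, (f (T^[s] ω)) ^ 2) + 1 with hM
  have hsum_nonneg : 0 ≤ ∑ s ∈ Finset.range N, (f (T^[s] ω)) ^ 2 :=
    Finset.sum_nonneg fun s _ => sq_nonneg _
  have hMpos : 0 < M := by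
    rw [hM]; have : (0:ℝ) ≤ (k : ℝ) := Nat.cast_nonneg k; linarith
  refine ⟨M, hMpos, ?_⟩
  intro n hn
  have hnpos : (0 : ℝ) < (n : ℝ) := by exact_mod_cast hn
  rcases lt_or_ge n N with hcase | hcase
  · -- small n : all indicators vanish
    have hzero : ∀ s ∈ Finset.range n, Set.indicator (Set.Ioi M) id ((f (T^[s] ω)) ^ 2) = 0 := by
      intro s hs
      have hsN : s ∈ Finset.range N := Finset.mem_range.mpr (lt_trans (Finset.mem_range.mp hs) hcase)
      have hle : (f (T^[s] ω)) ^ 2 ≤ ∑ t ∈ Finset.range N, (f (T^[t] ω)) ^ 2 :=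
        Finset.single_le_sum (f := fun t => (f (T^[t] ω)) ^ 2) (fun t _ => sq_nonneg _) hsN
      have : (f (T^[s] ω)) ^ 2 ∉ Set.Ioi M := by
        simp only [Set.mem_Ioi, not_lt, hM]
        have : (0:ℝ) ≤ (k : ℝ) := Nat.cast_nonneg k
        linarith
      rw [Set.indicator_of_notMem this]
    rw [Finset.sum_congr rfl hzero]
    simp only [Finset.sum_const_zero, mul_zero]
    exact hε
  · -- large n : compare with the k-truncation
    have hNle := hN n hcase
    have hterm : ∀ s ∈ Finset.range n,
        Set.indicator (Set.Ioi M) id ((f (T^[s] ω)) ^ 2) ≤ g k (T^[s] ω) := by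
      intro s _
      rw [hgdef]
      simp only []
      set x := (f (T^[s] ω)) ^ 2 with hx
      by_cases hxm : x ∈ Set.Ioi M
      · rw [Set.indicator_of_mem hxm]
        have hkM : (k : ℝ) ≤ M := by rw [hM]; linarith
        have : x ∈ Set.Ioi ((k : ℕ) : ℝ) := lt_of_le_of_lt hkM hxm
        rw [Set.indicator_of_mem this]
      · rw [Set.indicator_of_notMem hxm]
        exact hind_nonneg _ (Nat.cast_nonneg k) x
    have hsumle : ∑ s ∈ Finset.range n, Set.indicator (Set.Ioi M) id ((f (T^[s] ω)) ^ 2)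
        ≤ bS T (g k) n ω := Finset.sum_le_sum hterm
    calc (1 / (n : ℝ)) * ∑ s ∈ Finset.range n, Set.indicator (Set.Ioi M) id ((f (T^[s] ω)) ^ 2)
        ≤ (1 / (n : ℝ)) * bS T (g k) n ω := by
          refine mul_le_mul_of_nonneg_left hsumle ?_
          positivity
      _ = (n : ℝ)⁻¹ * bS T (g k) n ω := by rw [one_div]
      _ < ε := hNle
end
end

section
/- Let (Ω, 𝔽, μ) be a probability space, T : Ω → Ω a measurable measure-preserving ergodic transformation, and f : Ω → ℝ a measurable function whose cumulative distribution function F(z) := μ({ω : f(ω) ≤ z}) is continuous at every point of ℝ. Then for μ-almost every ω, sup_{z ∈ ℝ} | (1/n) ∑_{s=0}^{n−1} 1{ f(T^s ω) ≤ z } − F(z) | → 0 as n → ∞. -/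
open MeasureTheory Filter Topology
open scoped ENNReal

noncomputable section

namespace GC16

variable {Ω : Type*} [MeasurableSpace Ω]

/-- running maximum of Birkhoff sums, `M T g N = max (0, S₁, …, S_N)`. -/
def M (T : Ω → Ω) (g : Ω → ℝ) : ℕ → Ω → ℝ
  | 0, _ => 0
  | (N+1), ω => max (M T g N ω) (birkhoffSum T g (N+1) ω)

lemma M_nonneg (T : Ω → Ω) (g : Ω → ℝ) (N : ℕ) (ω : Ω) : 0 ≤ M T g N ω := by
  induction N with
  | zero => simp [M]
  | succ N ih => exact le_trans ih (le_max_left _ _)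

lemma M_mono (T : Ω → Ω) (g : Ω → ℝ) {N N' : ℕ} (h : N ≤ N') (ω : Ω) :
    M T g N ω ≤ M T g N' ω := by
  induction N' with
  | zero => simpa [Nat.le_zero.1 h]
  | succ N' ih =>
    rcases Nat.le_succ_iff.1 h with h' | h'
    · exact le_trans (ih h') (le_max_left _ _)
    · simp [h']

lemma S_le_M (T : Ω → Ω) (g : Ω → ℝ) {n N : ℕ} (h : n ≤ N) (ω : Ω) :
    birkhoffSum T g n ω ≤ M T g N ω := by
  rcases Nat.eq_zero_or_pos n with rfl | hn
  · simpa [birkhoffSum_zero] using M_nonneg T g N ω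
  · obtain ⟨m, rfl⟩ := Nat.exists_eq_add_of_lt hn
    refine le_trans ?_ (M_mono T g h ω)
    simp [M, zero_add]

lemma measurable_birkhoffSum {T : Ω → Ω} {g : Ω → ℝ} (hT : Measurable T)
    (hg : Measurable g) (n : ℕ) : Measurable (birkhoffSum T g n) := by
  unfold birkhoffSum
  exact Finset.measurable_sum _ fun k _ => hg.comp (hT.iterate k)

lemma measurable_M {T : Ω → Ω} {g : Ω → ℝ} (hT : Measurable T) (hg : Measurable g)
    (N : ℕ) : Measurable (M T g N) := by
  induction N with
  | zero => simpa [M] using measurable_const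
  | succ N ih => exact ih.max (measurable_birkhoffSum hT hg (N+1))

lemma exists_S_of_M_pos {T : Ω → Ω} {g : Ω → ℝ} {N : ℕ} {ω : Ω}
    (h : 0 < M T g N ω) : ∃ n, 1 ≤ n ∧ n ≤ N ∧ M T g N ω ≤ birkhoffSum T g n ω := by
  induction N with
  | zero => simp [M] at h
  | succ N ih =>
    rcases le_total (birkhoffSum T g (N+1) ω) (M T g N ω) with h' | h'
    · have hM : M T g (N+1) ω = M T g N ω := max_eq_left h'
      rw [hM] at h ⊢
      obtain ⟨n, h1, h2, h3⟩ := ih h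
      exact ⟨n, h1, h2.trans (Nat.le_succ N), h3⟩
    · exact ⟨N+1, Nat.succ_le_succ (Nat.zero_le N), le_refl _,
        max_le h' (le_refl _)⟩

lemma M_key {T : Ω → Ω} {g : Ω → ℝ} {N : ℕ} {ω : Ω} (h : 0 < M T g N ω) :
    M T g N ω ≤ g ω + M T g N (T ω) := by
  obtain ⟨n, h1, h2, h3⟩ := exists_S_of_M_pos h
  obtain ⟨m, rfl⟩ := Nat.exists_eq_add_of_le h1
  rw [add_comm] at h2 h3
  refine h3.trans ?_
  rw [birkhoffSum_succ' T g m ω]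
  exact add_le_add le_rfl (S_le_M T g (le_trans (Nat.le_succ m) h2) (T ω))

lemma abs_S_le {T : Ω → Ω} {g : Ω → ℝ} {C : ℝ} (hC : ∀ ω, |g ω| ≤ C) (n : ℕ) (ω : Ω) :
    |birkhoffSum T g n ω| ≤ n * C := by
  calc |birkhoffSum T g n ω| ≤ ∑ k ∈ Finset.range n, |g (T^[k] ω)| :=
        Finset.abs_sum_le_sum_abs _ _
    _ ≤ ∑ k ∈ Finset.range n, C := Finset.sum_le_sum fun k _ => hC _
    _ = n * C := by simp [mul_comm]

lemma abs_M_le {T : Ω → Ω} {g : Ω → ℝ} {C : ℝ} (hC : ∀ ω, |g ω| ≤ C) (N : ℕ) (ω : Ω) :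
    |M T g N ω| ≤ N * C := by
  rw [abs_of_nonneg (M_nonneg T g N ω)]
  induction N with
  | zero => simp [M]
  | succ N ih =>
    refine max_le (ih.trans ?_) ((abs_le.1 (abs_S_le hC (N+1) ω)).2)
    have hC0 : 0 ≤ C := le_trans (abs_nonneg _) (hC ω)
    have : (N : ℝ) ≤ (N+1 : ℕ) := by push_cast; linarith
    nlinarith

/-- bounded measurable functions are integrable on a probability space -/
lemma integrable_of_bounded {μ : Measure Ω} [IsProbabilityMeasure μ] {g : Ω → ℝ} {C : ℝ}
    (hg : Measurable g) (hC : ∀ ω, |g ω| ≤ C) : Integrable g μ := by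
  refine (integrable_const C).mono' hg.aestronglyMeasurable ?_
  exact Eventually.of_forall fun ω => by simpa [Real.norm_eq_abs] using hC ω

/-- The maximal ergodic theorem. -/
lemma maximal_ergodic {μ : Measure Ω} [IsProbabilityMeasure μ] {T : Ω → Ω} {g : Ω → ℝ}
    (hT : MeasurePreserving T μ μ) (hg : Measurable g) {C : ℝ} (hC : ∀ ω, |g ω| ≤ C) :
    0 ≤ ∫ ω in {ω | ∃ n, 1 ≤ n ∧ 0 < birkhoffSum T g n ω}, g ω ∂μ := by
  set A : ℕ → Set Ω := fun N => {ω | 0 < M T g N ω} with hA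
  have hTm : Measurable T := hT.measurable
  have hAm : ∀ N, MeasurableSet (A N) := fun N =>
    measurableSet_lt measurable_const (measurable_M hTm hg N)
  have hAmono : Monotone A := fun N N' h ω hω => lt_of_lt_of_le hω (M_mono T g h ω)
  have hgi : Integrable g μ := integrable_of_bounded hg hC
  have hMi : ∀ N, Integrable (M T g N) μ := fun N =>
    integrable_of_bounded (measurable_M hTm hg N) (abs_M_le hC N)
  have hMTi : ∀ N, Integrable (fun ω => M T g N (T ω)) μ := fun N =>
    integrable_of_bounded ((measurable_M hTm hg N).comp hTm) (fun ω => abs_M_le hC N (T ω))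
  -- the union
  have hAU : (⋃ N, A N) = {ω | ∃ n, 1 ≤ n ∧ 0 < birkhoffSum T g n ω} := by
    ext ω
    simp only [Set.mem_iUnion, Set.mem_setOf_eq, hA]
    constructor
    · rintro ⟨N, hN⟩
      obtain ⟨n, h1, _, h3⟩ := exists_S_of_M_pos hN
      exact ⟨n, h1, lt_of_lt_of_le hN h3⟩
    · rintro ⟨n, h1, h2⟩
      exact ⟨n, lt_of_lt_of_le h2 (S_le_M T g le_rfl ω)⟩
  -- the per-N inequality
  have hstep : ∀ N, 0 ≤ ∫ ω in A N, g ω ∂μ := by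
    intro N
    have key : ∀ ω ∈ A N, M T g N ω - M T g N (T ω) ≤ g ω := fun ω hω => by
      have := M_key (hω : 0 < M T g N ω); linarith
    have h1 : ∫ ω in A N, (M T g N ω - M T g N (T ω)) ∂μ ≤ ∫ ω in A N, g ω ∂μ := by
      refine setIntegral_mono_on (((hMi N).sub (hMTi N)).integrableOn) hgi.integrableOn
        (hAm N) key
    have h2 : ∫ ω in A N, (M T g N ω - M T g N (T ω)) ∂μ
        = ∫ ω in A N, M T g N ω ∂μ - ∫ ω in A N, M T g N (T ω) ∂μ :=
      integral_sub ((hMi N).integrableOn) ((hMTi N).integrableOn)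
    have h3 : ∫ ω in A N, M T g N ω ∂μ = ∫ ω, M T g N ω ∂μ := by
      refine setIntegral_eq_integral_of_forall_compl_eq_zero fun ω hω => ?_
      exact le_antisymm (not_lt.1 hω) (M_nonneg T g N ω)
    have h4 : ∫ ω in A N, M T g N (T ω) ∂μ ≤ ∫ ω, M T g N (T ω) ∂μ :=
      setIntegral_le_integral (hMTi N) (Eventually.of_forall fun ω => M_nonneg T g N (T ω))
    have h5 : ∫ ω, M T g N (T ω) ∂μ = ∫ ω, M T g N ω ∂μ := by
      rw [← integral_map hTm.aemeasurable (measurable_M hTm hg N).aestronglyMeasurable,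
        hT.map_eq]
    linarith
  -- limit
  rw [← hAU]
  have htend : Tendsto (fun N => ∫ ω in A N, g ω ∂μ) atTop (𝓝 (∫ ω in ⋃ N, A N, g ω ∂μ)) :=
    tendsto_setIntegral_of_monotone hAm hAmono hgi.integrableOn
  exact ge_of_tendsto' htend hstep



/-- limsup comparison under an `o(1)` perturbation. -/
lemma limsup_le_limsup_of_tendsto_sub {a b : ℕ → ℝ} {C : ℝ}
    (h : Tendsto (fun n => a n - b n) atTop (𝓝 0))
    (hb : ∀ᶠ n in atTop, |b n| ≤ C) :
    limsup a atTop ≤ limsup b atTop := by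
  have haB : ∀ᶠ n in atTop, |a n| ≤ C + 1 := by
    filter_upwards [hb, (Metric.tendsto_nhds.1 h) 1 one_pos] with n h1 h2
    have : |a n - b n| < 1 := by simpa [Real.dist_eq] using h2
    calc |a n| = |(a n - b n) + b n| := by ring_nf
      _ ≤ |a n - b n| + |b n| := abs_add_le _ _
      _ ≤ C + 1 := by linarith
  have hacb : IsCoboundedUnder (· ≤ ·) atTop a := by
    refine IsBoundedUnder.isCoboundedUnder_le ⟨-(C+1), ?_⟩
    rw [eventually_map]
    filter_upwards [haB] with n hn; exact (abs_le.1 hn).1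
  refine le_of_forall_pos_le_add fun ε hε => ?_
  have h1 : ∀ᶠ n in atTop, a n ≤ b n + ε := by
    filter_upwards [(Metric.tendsto_nhds.1 h) ε hε] with n hn
    have : |a n - b n| < ε := by simpa [Real.dist_eq] using hn
    linarith [(abs_le.1 this.le).2]
  have hbB : IsBoundedUnder (· ≤ ·) atTop (fun n => b n + ε) := by
    refine ⟨C + ε, ?_⟩
    rw [eventually_map]
    filter_upwards [hb] with n hn; linarith [(abs_le.1 hn).2]
  calc limsup a atTop ≤ limsup (fun n => b n + ε) atTop :=
        limsup_le_limsup h1 hacb hbB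
    _ = limsup b atTop + ε := by
        refine limsup_add_const atTop b ε ⟨C, ?_⟩ ?_
        · rw [eventually_map]; filter_upwards [hb] with n hn; exact (abs_le.1 hn).2
        · refine IsBoundedUnder.isCoboundedUnder_le ⟨-C, ?_⟩
          rw [eventually_map]; filter_upwards [hb] with n hn; exact (abs_le.1 hn).1

lemma limsup_eq_limsup_of_tendsto_sub {a b : ℕ → ℝ} {C : ℝ}
    (h : Tendsto (fun n => a n - b n) atTop (𝓝 0))
    (hb : ∀ᶠ n in atTop, |b n| ≤ C) :
    limsup a atTop = limsup b atTop := by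
  have haB : ∀ᶠ n in atTop, |a n| ≤ C + 1 := by
    filter_upwards [hb, (Metric.tendsto_nhds.1 h) 1 one_pos] with n h1 h2
    have : |a n - b n| < 1 := by simpa [Real.dist_eq] using h2
    calc |a n| = |(a n - b n) + b n| := by ring_nf
      _ ≤ |a n - b n| + |b n| := abs_add_le _ _
      _ ≤ C + 1 := by linarith
  refine le_antisymm (limsup_le_limsup_of_tendsto_sub h hb)
    (limsup_le_limsup_of_tendsto_sub ?_ haB)
  have : (fun n => b n - a n) = fun n => -(a n - b n) := by funext n; ring
  rw [this]
  simpa using h.neg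

/-- rational characterization of `c < limsup` for bounded sequences. -/
lemma lt_limsup_iff' {u : ℕ → ℝ} {C c : ℝ} (hu : ∀ n, |u n| ≤ C) :
    c < limsup u atTop ↔ ∃ q : ℚ, c < (q : ℝ) ∧ ∀ m, ∃ n, m ≤ n ∧ (q : ℝ) < u n := by
  have hB : IsBoundedUnder (· ≤ ·) atTop u :=
    ⟨C, by rw [eventually_map]; exact Eventually.of_forall fun n => (abs_le.1 (hu n)).2⟩
  have hcb : IsCoboundedUnder (· ≤ ·) atTop u := by
    refine IsBoundedUnder.isCoboundedUnder_le ⟨-C, ?_⟩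
    rw [eventually_map]; exact Eventually.of_forall fun n => (abs_le.1 (hu n)).1
  constructor
  · intro h
    obtain ⟨q, hq1, hq2⟩ := exists_rat_btwn h
    refine ⟨q, hq1, ?_⟩
    have := frequently_lt_of_lt_limsup hcb hq2
    simpa [frequently_atTop] using this
  · rintro ⟨q, hq1, hq2⟩
    refine lt_of_lt_of_le hq1 (le_limsup_of_frequently_le ?_ hB)
    rw [frequently_atTop]
    intro m; obtain ⟨n, h1, h2⟩ := hq2 m; exact ⟨n, h1, h2.le⟩



section Birkhoff

variable {Ω : Type*} [MeasurableSpace Ω] {T : Ω → Ω} {g : Ω → ℝ} {C : ℝ}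

lemma abs_avg_le (hC : ∀ ω, |g ω| ≤ C) (n : ℕ) (ω : 
Ω) :
    |birkhoffSum T g n ω / n| ≤ C := by
  have hC0 : 0 ≤ C := le_trans (abs_nonneg _) (hC ω)
  rcases Nat.eq_zero_or_pos n with rfl | hn
  · simpa using hC0
  · have hn' : (0:ℝ) < n := by exact_mod_cast hn
    rw [abs_div, abs_of_pos hn', div_le_iff₀ hn']
    simpa [mul_comm] using abs_S_le hC n ω

lemma limsup_avg_invariant (hC : ∀ ω, |g ω| ≤ C) (ω : Ω) :
    limsup (fun n => birkhoffSum T g n (T ω) / n) atTop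
      = limsup (fun n => birkhoffSum T g n ω / n) atTop := by
  refine limsup_eq_limsup_of_tendsto_sub (C := C) ?_
    (Eventually.of_forall fun n => abs_avg_le hC n ω)
  have heq : ∀ n : ℕ, birkhoffSum T g n (T ω) / n - birkhoffSum T g n ω / n
      = (g (T^[n] ω) - g ω) / n := by
    intro n
    rw [div_sub_div_same, birkhoffSum_apply_sub_birkhoffSum]
  simp only [heq]
  refine squeeze_zero_norm (fun n => ?_) (tendsto_const_div_atTop_nhds_zero_nat (2*C))
  rcases Nat.eq_zero_or_pos n with rfl | hn
  · simp
  · have hn' : (0:ℝ) < n := by exact_mod_cast hn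
    rw [Real.norm_eq_abs, abs_div, abs_of_pos hn', div_le_div_iff_of_pos_right hn']
    have h1 := hC (T^[n] ω); have h2 := hC ω
    have := abs_sub (g (T^[n] ω)) (g ω)
    linarith

lemma birkhoffSum_sub_const (T : Ω → Ω) (g : Ω → ℝ) (c : ℝ) (n : ℕ) (ω : Ω) :
    birkhoffSum T (fun x => g x - c) n ω = birkhoffSum T g n ω - n * c := by
  simp [birkhoffSum, Finset.sum_sub_distrib, mul_comm]

lemma measure_limsup_gt_eq_zero {μ : Measure Ω} [IsProbabilityMeasure μ]
    (hT : Ergodic T μ) (hg : Measurable g) (hC : ∀ ω, |g ω| ≤ C) {c : ℝ}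
    (hc : ∫ x, g x ∂μ < c) :
    μ {ω | c < limsup (fun n => birkhoffSum T g n ω / n) atTop} = 0 := by
  set u : ℕ → Ω → ℝ := fun n ω => birkhoffSum T g n ω / n with hu
  set E := {ω | c < limsup (fun n => u n ω) atTop} with hE
  have hTm : Measurable T := hT.toMeasurePreserving.measurable
  have hum : ∀ n, Measurable (u n) := fun n => (measurable_birkhoffSum hTm hg n).div_const _
  have hEm : MeasurableSet E := by
    have hEq : E = ⋃ (q : ℚ), ⋃ (_ : c < (q : ℝ)), ⋂ m, ⋃ n, ⋃ (_ : m ≤ n),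
        {ω | (q : ℝ) < u n ω} := by
      ext ω
      simp only [hE, Set.mem_setOf_eq, Set.mem_iUnion, Set.mem_iInter, Set.mem_setOf_eq]
      rw [lt_limsup_iff' (fun n => abs_avg_le hC n ω)]
      simp only [exists_prop]
      exact Iff.rfl
    rw [hEq]
    refine MeasurableSet.iUnion fun q => MeasurableSet.iUnion fun _ =>
      MeasurableSet.iInter fun m => MeasurableSet.iUnion fun n => MeasurableSet.iUnion fun _ =>
        measurableSet_lt measurable_const (hum n)
  have hinv : T ⁻¹' E = E := by
    ext ω
    simp only [Set.mem_preimage, hE, Set.mem_setOf_eq, hu]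
    rw [limsup_avg_invariant hC ω]
  rcases hT.ae_empty_or_univ hEm hinv with h | h
  · exact ae_eq_empty.1 h
  · exfalso
    have hE1 : μ E = 1 := by
      have := measure_congr h; simpa using this
    set g' : Ω → ℝ := fun x => g x - c with hg'
    have hg'm : Measurable g' := hg.sub measurable_const
    have hg'C : ∀ ω, |g' ω| ≤ C + |c| := by
      intro ω
      have := abs_sub (g ω) c
      have := hC ω
      simp only [hg']
      linarith
    set A := {ω | ∃ n, 1 ≤ n ∧ 0 < birkhoffSum T g' n ω} with hA
    have hsub : E ⊆ A := by
      intro ω hω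
      have hcb : IsCoboundedUnder (· ≤ ·) atTop (fun n => u n ω) :=
        IsBoundedUnder.isCoboundedUnder_le ⟨-C, by
          rw [eventually_map]
          exact Eventually.of_forall fun n => (abs_le.1 (abs_avg_le hC n ω)).1⟩
      have hfreq := frequently_lt_of_lt_limsup hcb hω
      rw [frequently_atTop] at hfreq
      obtain ⟨n, hn1, hn2⟩ := hfreq 1
      refine ⟨n, hn1, ?_⟩
      rw [birkhoffSum_sub_const]
      have hn' : (0:ℝ) < n := by exact_mod_cast hn1
      have := (lt_div_iff₀ hn').1 hn2
      linarith
    have hAm : MeasurableSet A := by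
      have : A = ⋃ n, ⋃ (_ : 1 ≤ n), {ω | 0 < birkhoffSum T g' n ω} := by
        ext ω; simp [hA]
      rw [this]
      exact MeasurableSet.iUnion fun n => MeasurableSet.iUnion fun _ =>
        measurableSet_lt measurable_const (measurable_birkhoffSum hTm hg'm n)
    have hA1 : μ A = 1 := by
      refine le_antisymm prob_le_one ?_
      calc (1:ℝ≥0∞) = μ E := hE1.symm
        _ ≤ μ A := measure_mono hsub
    have hmax := maximal_ergodic hT.toMeasurePreserving hg'm hg'C
    have hAc : μ Aᶜ = 0 := (prob_compl_eq_zero_iff hAm).2 hA1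
    rw [show {ω | ∃ n, 1 ≤ n ∧ 0 < birkhoffSum T g' n ω} = A from rfl,
      Measure.restrict_congr_set (ae_eq_univ.2 hAc), Measure.restrict_univ] at hmax
    have hint : ∫ x, g' x ∂μ = ∫ x, g x ∂μ - c := by
      simp only [hg']
      rw [integral_sub (integrable_of_bounded hg hC) (integrable_const c)]
      simp
    rw [hint] at hmax
    linarith

lemma ae_limsup_avg_le {μ : Measure Ω} [IsProbabilityMeasure μ] (hT : Ergodic T μ)
    (hg : Measurable g) (hC : ∀ ω, |g ω| ≤ C) :
    ∀ᵐ ω ∂μ, limsup (fun n => birkhoffSum T g n ω / n) atTop ≤ ∫ x, g x ∂μ := by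
  have h : ∀ j : ℕ, ∀ᵐ ω ∂μ,
      ¬ (∫ x, g x ∂μ + 1/(j+1) < limsup (fun n => birkhoffSum T g n ω / n) atTop) := by
    intro j
    have hj : (0:ℝ) < 1/(j+1) := by positivity
    have := measure_limsup_gt_eq_zero hT hg hC
      (c := ∫ x, g x ∂μ + 1/(j+1)) (lt_add_of_pos_right _ hj)
    exact measure_eq_zero_iff_ae_notMem.1 this
  rw [← ae_all_iff] at h
  filter_upwards [h] with ω hω
  refine le_of_forall_pos_le_add fun ε hε => ?_
  obtain ⟨j, hj⟩ := exists_nat_one_div_lt hε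
  have := not_lt.1 (hω j)
  have hcast : (1:ℝ)/(j+1) = 1/((j:ℝ)+1) := by norm_num
  linarith

theorem ae_tendsto_birkhoffAvg {μ : Measure Ω} [IsProbabilityMeasure μ] (hT : Ergodic T μ)
    (hg : Measurable g) (hC : ∀ ω, |g ω| ≤ C) :
    ∀ᵐ ω ∂μ, Tendsto (fun n => birkhoffSum T g n ω / n) atTop (𝓝 (∫ x, g x ∂μ)) := by
  have h1 := ae_limsup_avg_le hT hg hC
  have h2 := ae_limsup_avg_le hT hg.neg (g := fun x => -g x)
    (fun ω => by simpa using hC ω)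
  have hSneg : ∀ (n : ℕ) (ω : Ω), birkhoffSum T (fun x => -g x) n ω
      = -(birkhoffSum T g n ω) := by
    intro n ω; simp [birkhoffSum]
  have hintneg : ∫ x, -g x ∂μ = -∫ x, g x ∂μ := integral_neg g
  filter_upwards [h1, h2] with ω hω1 hω2
  rw [hintneg] at hω2
  set l := ∫ x, g x ∂μ with hl
  refine tendsto_order.2 ⟨fun a ha => ?_, fun b hb => ?_⟩
  · have hlt : limsup (fun n => birkhoffSum T (fun x => -g x) n ω / n) atTop < -a := by
      exact lt_of_le_of_lt hω2 (by linarith)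
    have hev := eventually_lt_of_limsup_lt hlt
      ⟨C, by
        rw [eventually_map]
        exact Eventually.of_forall fun n =>
          (abs_le.1 (abs_avg_le (fun ω => by simpa using hC ω) n ω)).2⟩
    filter_upwards [hev] with n hn
    rw [hSneg, neg_div] at hn
    linarith
  · have hlt : limsup (fun n => birkhoffSum T g n ω / n) atTop < b := lt_of_le_of_lt hω1 hb
    exact eventually_lt_of_limsup_lt hlt
      ⟨C, by
        rw [eventually_map]
        exact Eventually.of_forall fun n => (abs_le.1 (abs_avg_le hC n ω)).2⟩

end Birkhoff

section Grid

variable {Ω : Type*} [MeasurableSpace Ω]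

lemma exists_quantile {μ : Measure Ω} [IsProbabilityMeasure μ] {f : Ω → ℝ} (hf : Measurable f)
    (hcont : Continuous (fun z : ℝ => (μ {ω | f ω ≤ z}).toReal)) {p : ℝ}
    (h0 : 0 < p) (h1 : p < 1) : ∃ z : ℝ, (μ {ω | f ω ≤ z}).toReal = p := by
  set F : ℝ → ℝ := fun z => (μ {ω | f ω ≤ z}).toReal with hFdef
  have hFmono : Monotone F := by
    intro a b hab
    exact ENNReal.toReal_mono (measure_ne_top μ _)
      (measure_mono fun x hx => le_trans hx hab)
  have hmeas : ∀ r : ℝ, MeasurableSet {ω | f ω ≤ r} := fun r => hf measurableSet_Iic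
  have hbot : ∃ a : ℝ, F a < p := by
    have hanti : Antitone (fun m : ℕ => {ω | f ω ≤ -(m:ℝ)}) := by
      intro m m' h x hx
      simp only [Set.mem_setOf_eq] at hx ⊢
      have hmm : (m:ℝ) ≤ (m':ℝ) := by exact_mod_cast h
      linarith
    have hempty : (⋂ m : ℕ, {ω | f ω ≤ -(m:ℝ)}) = (∅ : Set Ω) := by
      ext x
      simp only [Set.mem_iInter, Set.mem_setOf_eq, Set.mem_empty_iff_false, iff_false,
        not_forall, not_le]
      obtain ⟨m, hm⟩ := exists_nat_gt (-f x)
      exact ⟨m, by linarith⟩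
    have htend := tendsto_measure_iInter_atTop (ι := ℕ)
      (fun m => (hmeas (-(m:ℝ))).nullMeasurableSet) hanti ⟨0, measure_ne_top μ _⟩
    rw [hempty, measure_empty] at htend
    have hev : ∀ᶠ m : ℕ in atTop, μ {ω | f ω ≤ -(m:ℝ)} < ENNReal.ofReal p :=
      htend.eventually_lt_const (by simpa using ENNReal.ofReal_pos.2 h0)
    obtain ⟨m, hm⟩ := hev.exists
    exact ⟨-(m:ℝ), ENNReal.toReal_lt_of_lt_ofReal hm⟩
  have htop : ∃ b : ℝ, p < F b := by
    have hmono : Monotone (fun m : ℕ => {ω | f ω ≤ (m:ℝ)}) := by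
      intro m m' h x hx
      simp only [Set.mem_setOf_eq] at hx ⊢
      have hmm : (m:ℝ) ≤ (m':ℝ) := by exact_mod_cast h
      linarith
    have huniv : (⋃ m : ℕ, {ω | f ω ≤ (m:ℝ)}) = (Set.univ : Set Ω) := by
      ext x
      simp only [Set.mem_iUnion, Set.mem_setOf_eq, Set.mem_univ, iff_true]
      obtain ⟨m, hm⟩ := exists_nat_gt (f x)
      exact ⟨m, hm.le⟩
    have htend := tendsto_measure_iUnion_atTop (μ := μ) hmono
    rw [huniv] at htend
    have h1' : ENNReal.ofReal p < μ Set.univ := by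
      rw [measure_univ]; exact ENNReal.ofReal_lt_one.2 h1
    have hev : ∀ᶠ m : ℕ in atTop, ENNReal.ofReal p < μ {ω | f ω ≤ (m:ℝ)} :=
      htend.eventually_const_lt h1'
    obtain ⟨m, hm⟩ := hev.exists
    exact ⟨(m:ℝ), (ENNReal.ofReal_lt_iff_lt_toReal h0.le (measure_ne_top μ _)).1 hm⟩
  obtain ⟨a, ha⟩ := hbot
  obtain ⟨b, hb⟩ := htop
  have hab : a ≤ b := by
    by_contra hcon
    push_neg at hcon
    have := hFmono hcon.le
    linarith
  have := intermediate_value_Icc hab hcont.continuousOn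
  obtain ⟨z, _, hz⟩ := this ⟨ha.le, hb.le⟩
  exact ⟨z, hz⟩

lemma grid_bound {F G : ℝ → ℝ} (hF : Monotone F) (hG : Monotone G)
    (hF0 : ∀ z, 0 ≤ F z) (hF1 : ∀ z, F z ≤ 1) (hG0 : ∀ z, 0 ≤ G z) (hG1 : ∀ z, G z ≤ 1)
    {k : ℕ} {δ : ℝ} {z : ℕ → ℝ}
    (hFz : ∀ i, i ≤ k → F (z i) = ((i:ℝ)+1) / ((k:ℝ)+2))
    (hclose : ∀ i, i ≤ k → |G (z i) - F (z i)| ≤ δ) (x : ℝ) :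
    |G x - F x| ≤ δ + 1/((k:ℝ)+2) := by
  classical
  have hk2 : (0:ℝ) < (k:ℝ)+2 := by positivity
  have hh : (0:ℝ) < 1/((k:ℝ)+2) := by positivity
  have hδ : 0 ≤ δ := le_trans (abs_nonneg _) (hclose 0 (Nat.zero_le k))
  have hGle : ∀ i, i ≤ k → G (z i) ≤ F (z i) + δ := fun i hi => by
    have := (abs_le.1 (hclose i hi)).2; linarith
  have hGge : ∀ i, i ≤ k → F (z i) - δ ≤ G (z i) := fun i hi => by
    have := (abs_le.1 (hclose i hi)).1; linarith
  rcases lt_or_ge x (z 0) with hx0 | hx0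
  · have h1 : G x ≤ G (z 0) := hG hx0.le
    have h2 : F x ≤ F (z 0) := hF hx0.le
    have hFz0 : F (z 0) = 1/((k:ℝ)+2) := by
      have := hFz 0 (Nat.zero_le k); simpa using this
    have := hG0 x; have := hF0 x
    have := hGle 0 (Nat.zero_le k)
    rw [abs_sub_le_iff]
    constructor <;> linarith
  · rcases le_or_gt (z k) x with hxk | hxk
    · have h1 : G (z k) ≤ G x := hG hxk
      have h2 : F (z k) ≤ F x := hF hxk
      have hFzk : F (z k) = 1 - 1/((k:ℝ)+2) := by
        rw [hFz k le_rfl]; field_simp; ring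
      have := hG1 x; have := hF1 x
      have := hGge k le_rfl
      rw [abs_sub_le_iff]
      constructor <;> linarith
    · set i := Nat.findGreatest (fun j => z j ≤ x) k with hi
      have hPi : z i ≤ x := Nat.findGreatest_spec (P := fun j => z j ≤ x) (Nat.zero_le k) hx0
      have hik : i ≤ k := Nat.findGreatest_le k
      have hink : i ≠ k := by
        intro h; rw [h] at hPi; exact absurd hPi (not_le.2 hxk)
      have hik' : i + 1 ≤ k := Nat.succ_le_of_lt (lt_of_le_of_ne hik hink)
      have hnot : ¬ z (i+1) ≤ x :=
        Nat.findGreatest_is_greatest (P := fun j => z j ≤ x) (Nat.lt_succ_self i) hik'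
      have hxlt : x < z (i+1) := not_le.1 hnot
      have hgap : F (z (i+1)) = F (z i) + 1/((k:ℝ)+2) := by
        rw [hFz i hik, hFz (i+1) hik']
        push_cast
        ring
      have h1 : G (z i) ≤ G x := hG hPi
      have h2 : G x ≤ G (z (i+1)) := hG hxlt.le
      have h3 : F (z i) ≤ F x := hF hPi
      have h4 : F x ≤ F (z (i+1)) := hF hxlt.le
      have h5 := hGle (i+1) hik'
      have h6 := hGge i hik
      rw [abs_sub_le_iff]
      constructor <;> linarith

end Grid

end GC16

/-- Glivenko–Cantelli theorem for strictly stationary ergodic sequences with continuous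
marginal CDF: for a.e. `ω`,
`sup_z |(1/n) ∑_{s<n} 1{f(T^s ω) ≤ z} − F(z)| → 0` where `F(z) = μ{f ≤ z}`. -/
theorem stmt16 {Ω : Type*} [MeasurableSpace Ω] (μ : Measure Ω) [IsProbabilityMeasure μ]
    (T : Ω → Ω) (hT : Ergodic T μ)
    (f : Ω → ℝ) (hf : Measurable f)
    (hcont : Continuous (fun z : ℝ => (μ {ω | f ω ≤ z}).toReal)) :
    ∀ᵐ ω ∂μ, Tendsto
      (fun n : ℕ =>
        ⨆ z : ℝ,
          |(1 / (n : ℝ)) * (∑ s ∈ Finset.range n,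
              Set.indicator (Set.Iic z) (fun _ => (1 : ℝ)) (f (T^[s] ω)))
            - (μ {x | f x ≤ z}).toReal|)
      atTop (nhds 0) := by
  classical
  set F : ℝ → ℝ := fun z => (μ {x | f x ≤ z}).toReal with hFdef
  set g : ℝ → Ω → ℝ := fun z x => Set.indicator (Set.Iic z) (fun _ => (1:ℝ)) (f x) with hgdef
  have hgmeas : ∀ z, Measurable (g z) :=
    fun z => (measurable_const.indicator measurableSet_Iic).comp hf
  have hg01 : ∀ z x, 0 ≤ g z x ∧ g z x ≤ 1 := by
    intro z x; simp only [hgdef, Set.indicator_apply]; split_ifs <;> norm_num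
  have hgbd : ∀ z x, |g z x| ≤ 1 := by
    intro z x
    rw [abs_le]
    exact ⟨by linarith [(hg01 z x).1], (hg01 z x).2⟩
  have hgint : ∀ z, ∫ x, g z x ∂μ = F z := by
    intro z
    have hrw : (fun x => g z x) = (f ⁻¹' Set.Iic z).indicator (fun _ => (1:ℝ)) := by
      funext x
      simp [hgdef, Set.indicator_apply, Set.mem_preimage]
    rw [hrw, integral_indicator_const (1:ℝ) (hf measurableSet_Iic)]
    simp [hFdef]
    rfl
  have hB : ∀ z : ℝ, ∀ᵐ ω ∂μ, Tendsto (fun n => birkhoffSum T (g z) n ω / n)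
      atTop (𝓝 (F z)) := by
    intro z
    have := GC16.ae_tendsto_birkhoffAvg hT (hgmeas z) (hgbd z)
    rwa [hgint z] at this
  have hFmono : Monotone F := fun a b hab => ENNReal.toReal_mono (measure_ne_top μ _)
    (measure_mono fun x hx => le_trans hx hab)
  have hF0 : ∀ z, 0 ≤ F z := fun z => ENNReal.toReal_nonneg
  have hF1 : ∀ z, F z ≤ 1 := by
    intro z
    rw [hFdef]
    calc (μ {x | f x ≤ z}).toReal ≤ (μ Set.univ).toReal :=
          ENNReal.toReal_mono (measure_ne_top μ _) (measure_mono (Set.subset_univ _))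
      _ = 1 := by simp
  have hq : ∀ k i : ℕ, ∃ z : ℝ, (i ≤ k → F z = ((i:ℝ)+1)/((k:ℝ)+2)) := by
    intro k i
    by_cases h : i ≤ k
    · have h0 : (0:ℝ) < ((i:ℝ)+1)/((k:ℝ)+2) := by positivity
      have h1 : ((i:ℝ)+1)/((k:ℝ)+2) < 1 := by
        rw [div_lt_one (by positivity)]
        have : (i:ℝ) ≤ k := by exact_mod_cast h
        linarith
      obtain ⟨z, hz⟩ := GC16.exists_quantile hf hcont h0 h1
      exact ⟨z, fun _ => hz⟩
    · exact ⟨0, fun h' => absurd h' h⟩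
  choose zpt hzpt using hq
  have hae : ∀ᵐ ω ∂μ, ∀ k i : ℕ, Tendsto (fun n => birkhoffSum T (g (zpt k i)) n ω / n)
      atTop (𝓝 (F (zpt k i))) :=
    ae_all_iff.2 fun k => ae_all_iff.2 fun i => hB (zpt k i)
  filter_upwards [hae] with ω hω
  have hconv : ∀ (n : ℕ) (z : ℝ), (1 / (n : ℝ)) * (∑ s ∈ Finset.range n,
      Set.indicator (Set.Iic z) (fun _ => (1 : ℝ)) (f (T^[s] ω)))
      = birkhoffSum T (g z) n ω / n := by
    intro n z
    rw [one_div, inv_mul_eq_div]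
    rfl
  simp only [hconv]
  set Gn : ℕ → ℝ → ℝ := fun n z => birkhoffSum T (g z) n ω / n with hGndef
  have hGn01 : ∀ n z, 0 ≤ Gn n z ∧ Gn n z ≤ 1 := by
    intro n z
    rcases Nat.eq_zero_or_pos n with rfl | hn
    · simp [hGndef]
    · have hn' : (0:ℝ) < n := by exact_mod_cast hn
      have h1 : (0:ℝ) ≤ birkhoffSum T (g z) n ω :=
        Finset.sum_nonneg fun s _ => (hg01 z _).1
      have h2 : birkhoffSum T (g z) n ω ≤ n := by
        calc birkhoffSum T (g z) n ω ≤ ∑ _s ∈ Finset.range n, (1:ℝ) :=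
              Finset.sum_le_sum fun s _ => (hg01 z _).2
          _ = n := by simp
      constructor
      · simp only [hGndef]; positivity
      · simp only [hGndef]
        rw [div_le_one hn']
        exact h2
  have hGnmono : ∀ n, Monotone (Gn n) := by
    intro n a b hab
    have hsum : birkhoffSum T (g a) n ω ≤ birkhoffSum T (g b) n ω := by
      refine Finset.sum_le_sum fun s _ => ?_
      exact Set.indicator_le_indicator_of_subset (Set.Iic_subset_Iic.2 hab)
        (fun _ => zero_le_one) _
    simp only [hGndef]
    rcases Nat.eq_zero_or_pos n with rfl | hn
    · simp
    · have hn' : (0:ℝ) < n := by exact_mod_cast hn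
      exact (div_le_div_iff_of_pos_right hn').2 hsum
  have hbdd : ∀ n, BddAbove (Set.range fun z => |Gn n z - F z|) := by
    intro n
    refine ⟨2, fun y hy => ?_⟩
    obtain ⟨z, rfl⟩ := hy
    have h1 := hGn01 n z
    have h2 := hF0 z
    have h3 := hF1 z
    have : |Gn n z - F z| ≤ 2 := by
      rw [abs_sub_le_iff]
      constructor <;> linarith [h1.1, h1.2]
    exact this
  refine tendsto_order.2 ⟨fun a ha => ?_, fun b hb => ?_⟩
  · refine Eventually.of_forall fun n => lt_of_lt_of_le ha ?_
    exact le_trans (abs_nonneg _) (le_ciSup (hbdd n) (0:ℝ))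
  · obtain ⟨k, hk⟩ := exists_nat_one_div_lt (by linarith : (0:ℝ) < b/3)
    have hk2 : 1/((k:ℝ)+2) < b/3 := by
      refine lt_of_le_of_lt ?_ hk
      have h1 : (0:ℝ) < (k:ℝ)+1 := by positivity
      have h2 : ((k:ℝ)+1) ≤ (k:ℝ)+2 := by linarith
      exact one_div_le_one_div_of_le h1 h2
    have hev : ∀ᶠ n in atTop, ∀ i ∈ Finset.range (k+1),
        |Gn n (zpt k i) - F (zpt k i)| ≤ b/3 := by
      rw [eventually_all_finset]
      intro i _
      have := Metric.tendsto_nhds.1 (hω k i) (b/3) (by linarith)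
      filter_upwards [this] with n hn
      rw [Real.dist_eq] at hn
      exact hn.le
    filter_upwards [hev] with n hn
    have hG := GC16.grid_bound hFmono (hGnmono n) hF0 hF1
      (fun z => (hGn01 n z).1) (fun z => (hGn01 n z).2)
      (z := zpt k) (δ := b/3)
      (fun i hi => hzpt k i hi)
      (fun i hi => hn i (Finset.mem_range.2 (Nat.lt_succ_of_le hi)))
    have hsup : (⨆ z, |Gn n z - F z|) ≤ b/3 + 1/((k:ℝ)+2) := ciSup_le fun z => hG z
    calc (⨆ z, |Gn n z - F z|) ≤ b/3 + 1/((k:ℝ)+2) := hsup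
      _ < b := by linarith
end
end
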